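/- arXiv:2505.13142 — 10 statements merged into one kernel-verified Lean document; each statement's English description precedes it below -/
import Mathlib

section
/- Let n_s ≥ 2 be an integer. For any real numbers w₁, b₁, w₂, b₂ there exist vectors v₁, c₁, v₂ ∈ ℝ^{n_s} and a real number c₂ such that for every x ∈ ℝ one has v₂ᵀ LN(v₁ x + c₁) + c₂ = w₂ · sign(w₁ x + b₁) + b₂. Consequently every function ℝ → ℝ of the form x ↦ w₂ sign(w₁x+b₁)+b₂ is exactly realized by a shallow LN-Net of width n_s. -/
/-- Layer normalization on `ℝ^n`: `LN(h)ⱼ = (hⱼ − μ)/σ` when `σ ≠ 0`, and `0` when `σ = 0`. -/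
noncomputable def LN {n : ℕ} (h : Fin n → ℝ) : Fin n → ℝ :=
  let μ : ℝ := (∑ i, h i) / n
  let σ : ℝ := Real.sqrt ((∑ i, (h i - μ) ^ 2) / n)
  if σ = 0 then 0 else fun j => (h j - μ) / σ

/-- Every function `x ↦ w₂ · sign(w₁ x + b₁) + b₂` is exactly realized by a shallow
LN-Net of width `n_s ≥ 2`. -/
theorem shallow_LNNet_represents_sign (ns : ℕ) (hns : 2 ≤ ns) (w₁ b₁ w₂ b₂ : ℝ) :
    ∃ (v₁ c₁ v₂ : Fin ns → ℝ) (c₂ : ℝ), ∀ x : ℝ,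
      (∑ j, v₂ j * LN (fun i => v₁ i * x + c₁ i) j) + c₂
        = w₂ * Real.sign (w₁ * x + b₁) + b₂ := by
  have hns0 : (0:ℝ) < (ns:ℝ) := by
    have : 0 < ns := by omega
    exact_mod_cast this
  set i0 : Fin ns := ⟨0, by omega⟩ with hi0
  set i1 : Fin ns := ⟨1, by omega⟩ with hi1
  have hne : i0 ≠ i1 := by simp [hi0, hi1, Fin.ext_iff]
  refine ⟨(fun i => if i = i0 then w₁ else if i = i1 then -w₁ else 0),
          (fun i => if i = i0 then b₁ else if i = i1 then -b₁ else 0),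
          (fun i => if i = i0 then w₂ * Real.sqrt (2 / ns) else 0), b₂, ?_⟩
  intro x
  set t := w₁ * x + b₁ with ht
  have hh : (fun i => (if i = i0 then w₁ else if i = i1 then -w₁ else 0) * x
      + (if i = i0 then b₁ else if i = i1 then -b₁ else 0))
      = fun i => (if i = i0 then t else 0) + (if i = i1 then -t else 0) := by
    funext i
    by_cases h0 : i = i0 <;> by_cases h1 : i = i1
    · exact absurd (h0 ▸ h1) hne
    · simp [h0, h1, hne, Ne.symm hne, ht]
    · simp [h0, h1, hne, Ne.symm hne, ht]; ring
    · simp [h0, h1]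
  have hsum : (∑ i, ((if i = i0 then t else 0) + (if i = i1 then -t else 0))) = 0 := by
    rw [Finset.sum_add_distrib, Finset.sum_ite_eq', Finset.sum_ite_eq']
    simp
  have hsq : (∑ i, (((if i = i0 then t else 0) + (if i = i1 then -t else 0)) - 0) ^ 2)
      = 2 * t ^ 2 := by
    have : ∀ i : Fin ns, (((if i = i0 then t else 0) + (if i = i1 then -t else 0)) - 0) ^ 2
        = (if i = i0 then t ^ 2 else 0) + (if i = i1 then t ^ 2 else 0) := by
      intro i
      by_cases h0 : i = i0 <;> by_cases h1 : i = i1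
      · exact absurd (h0 ▸ h1) hne
      · simp [h0, h1, hne, Ne.symm hne]
      · simp [h0, h1, hne, Ne.symm hne]
      · simp [h0, h1]
    rw [Finset.sum_congr rfl fun i _ => this i, Finset.sum_add_distrib,
      Finset.sum_ite_eq', Finset.sum_ite_eq']
    simp; ring
  rw [show (fun i => (if i = i0 then w₁ else if i = i1 then -w₁ else 0) * x
      + (if i = i0 then b₁ else if i = i1 then -b₁ else 0)) = _ from hh]
  unfold LN
  simp only [hsum, zero_div, sub_zero] at *
  rw [hsq]
  by_cases htz : t = 0
  · have : Real.sqrt (2 * t ^ 2 / ns) = 0 := by simp [htz]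
    simp [this, htz]
  · have hσ : Real.sqrt (2 * t ^ 2 / ns) = |t| * Real.sqrt (2 / ns) := by
      rw [show 2 * t ^ 2 / (ns:ℝ) = t ^ 2 * (2 / ns) by ring,
        Real.sqrt_mul (sq_nonneg t), Real.sqrt_sq_eq_abs]
    have hs2 : (0:ℝ) < Real.sqrt (2 / ns) := Real.sqrt_pos.mpr (by positivity)
    have hσne : Real.sqrt (2 * t ^ 2 / ns) ≠ 0 := by
      rw [hσ]; positivity
    rw [if_neg hσne]
    have : (∑ j, (if j = i0 then w₂ * Real.sqrt (2 / ns) else 0) *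
        (((if j = i0 then t else 0) + (if j = i1 then -t else 0)) / Real.sqrt (2 * t ^ 2 / ns)))
        = ∑ j, (if j = i0 then w₂ * Real.sqrt (2 / ns) * (t / Real.sqrt (2 * t ^ 2 / ns)) else 0) := by
      refine Finset.sum_congr rfl fun j _ => ?_
      by_cases h0 : j = i0
      · simp [h0, hne, Ne.symm hne]
      · simp [h0]
    rw [this, Finset.sum_ite_eq']
    simp only [Finset.mem_univ, if_true]
    have hsign : w₂ * Real.sqrt (2 / ns) * (t / Real.sqrt (2 * t ^ 2 / ns))
        = w₂ * Real.sign t := by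
      rw [hσ]
      rcases lt_or_gt_of_ne htz with h | h
      · rw [Real.sign_of_neg h, abs_of_neg h]
        field_simp
      · rw [Real.sign_of_pos h, abs_of_pos h]
        field_simp
    rw [hsign]
end

section
/- Let n_s ≥ 3 be an integer and φ(x) = x/√(x²+1). For any real numbers w₁, b₁, w₂, b₂ there exist vectors v₁, c₁, v₂ ∈ ℝ^{n_s} and a real number c₂ such that for every x ∈ ℝ one has v₂ᵀ LN(v₁ x + c₁) + c₂ = w₂ · φ(w₁ x + b₁) + b₂. Consequently every function ℝ → ℝ of the form x ↦ w₂ φ(w₁x+b₁)+b₂ is exactly realized by a shallow LN-Net of width n_s. -/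
/-- The activation function `φ(x) = x/√(x²+1)`. -/
noncomputable def phi (x : ℝ) : ℝ := x / Real.sqrt (x ^ 2 + 1)

lemma sum_three_aux {ns : ℕ} (hns : 3 ≤ ns) (g : ℕ → ℝ) (hg : ∀ i, 3 ≤ i → g i = 0) :
    ∑ j : Fin ns, g j.val = g 0 + g 1 + g 2 := by
  rw [Fin.sum_univ_eq_sum_range, ← Finset.sum_subset (Finset.range_subset_range.mpr hns)
    (fun i _ hni => hg i (by simpa using hni))]
  simp [Finset.sum_range_succ]

/-- Every function `x ↦ w₂ · φ(w₁ x + b₁) + b₂`, with `φ(x) = x/√(x²+1)`, is exactly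
realized by a shallow LN-Net of width `n_s ≥ 3`. -/
theorem shallow_LNNet_represents_phi (ns : ℕ) (hns : 3 ≤ ns) (w₁ b₁ w₂ b₂ : ℝ) :
    ∃ (v₁ c₁ v₂ : Fin ns → ℝ) (c₂ : ℝ), ∀ x : ℝ,
      (∑ j, v₂ j * LN (fun i => v₁ i * x + c₁ i) j) + c₂
        = w₂ * phi (w₁ * x + b₁) + b₂ := by
  have hns0 : (0:ℝ) < ns := by positivity
  set a : ℝ := Real.sqrt 3 / 2 with ha
  have ha2 : a ^ 2 = 3 / 4 := by
    rw [ha, div_pow, Real.sq_sqrt (by norm_num : (3:ℝ) ≥ 0)]; norm_num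
  refine ⟨fun j => if j.val = 0 then w₁ else if j.val = 1 then -w₁/2 else
            if j.val = 2 then -w₁/2 else 0,
          fun j => if j.val = 0 then b₁ else if j.val = 1 then a - b₁/2 else
            if j.val = 2 then -a - b₁/2 else 0,
          fun j => if j.val = 0 then w₂ * Real.sqrt (3 / (2*ns)) else 0,
          b₂, ?_⟩
  intro x
  set t : ℝ := w₁ * x + b₁ with ht
  set H : ℕ → ℝ := fun i => if i = 0 then t else if i = 1 then a - t/2 else
      if i = 2 then -a - t/2 else 0 with hH
  have hHeq : (fun i : Fin ns =>
      (if i.val = 0 then w₁ else if i.val = 1 then -w₁/2 else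
        if i.val = 2 then -w₁/2 else 0) * x +
      (if i.val = 0 then b₁ else if i.val = 1 then a - b₁/2 else
        if i.val = 2 then -a - b₁/2 else 0)) = fun i => H i.val := by
    funext i
    simp only [hH]
    split_ifs <;> ring
  have hsum : ∑ j : Fin ns, H j.val = 0 := by
    rw [sum_three_aux hns _ (fun i hi => by
      simp only [hH]; rw [if_neg, if_neg, if_neg] <;> omega)]
    simp only [hH]; norm_num; ring
  have hμ : (∑ j : Fin ns, H j.val) / (ns:ℝ) = 0 := by rw [hsum]; simp
  have hsq : ∑ j : Fin ns, (H j.val - 0) ^ 2 = 3/2 * (t^2 + 1) := by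
    rw [sum_three_aux hns (fun i => (H i - 0) ^ 2) (fun i hi => by
      show (H i - 0) ^ 2 = 0
      simp only [hH]; rw [if_neg (by omega : ¬ i = 0), if_neg (by omega : ¬ i = 1),
        if_neg (by omega : ¬ i = 2)]; ring)]
    simp only [hH]
    norm_num
    nlinarith [ha2]
  have hstpos : (0:ℝ) < 3/2 * (t^2+1) / ns := by positivity
  set σ : ℝ := Real.sqrt (3/2 * (t^2+1) / ns) with hσ
  have hσpos : 0 < σ := Real.sqrt_pos.mpr hstpos
  have hLN : LN (fun i => H i.val) = fun j : Fin ns => (H j.val - 0) / σ := by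
    simp only [LN, hμ, hsq, hσ]
    rw [if_neg hσpos.ne']
  have hσval : σ = Real.sqrt (3/(2*ns)) * Real.sqrt (t^2+1) := by
    rw [hσ, ← Real.sqrt_mul (by positivity)]
    ring_nf
  have hLHS : ∑ j : Fin ns, (if j.val = 0 then w₂ * Real.sqrt (3 / (2*ns)) else 0) *
      ((H j.val - 0) / σ) = w₂ * Real.sqrt (3/(2*ns)) * (t / σ) := by
    rw [sum_three_aux hns (fun i => (if i = 0 then w₂ * Real.sqrt (3 / (2*(ns:ℝ))) else 0) *
      ((H i - 0) / σ)) (fun i hi => by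
      show (if i = 0 then w₂ * Real.sqrt (3 / (2*(ns:ℝ))) else 0) * ((H i - 0) / σ) = 0
      rw [if_neg (by omega : ¬ i = 0)]; ring)]
    simp only [hH]
    norm_num
  rw [hHeq, hLN, hLHS, hσval]
  have h1 : Real.sqrt (3/(2*(ns:ℝ))) ≠ 0 := by positivity
  have h2 : Real.sqrt (t^2+1) ≠ 0 := by positivity
  rw [phi]
  field_simp
end

section
/- For every integer n_s ≥ 2 and every shallow LN-Net f: ℝ → ℝ of width n_s, the uniform distance of f from the function x ↦ cos(πx) on the interval [−2, 2] is at least 1; that is, sup_{x ∈ [−2,2]} |f(x) − cos(πx)| ≥ 1. In particular, shallow LN-Nets are not universal approximators of continuous functions on compact intervals. -/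
lemma LN_apply {n : ℕ} (h : Fin n → ℝ) (j : Fin n) :
    LN h j =
      if Real.sqrt ((∑ i, (h i - (∑ i, h i) / n) ^ 2) / n) = 0 then 0
      else (h j - (∑ i, h i) / n) / Real.sqrt ((∑ i, (h i - (∑ i, h i) / n) ^ 2) / n) := by
  show (if Real.sqrt ((∑ i, (h i - (∑ i, h i) / n) ^ 2) / n) = 0 then (0 : Fin n → ℝ)
      else fun j => (h j - (∑ i, h i) / n) /
        Real.sqrt ((∑ i, (h i - (∑ i, h i) / n) ^ 2) / n)) j = _
  by_cases hc : Real.sqrt ((∑ i, (h i - (∑ i, h i) / n) ^ 2) / n) = 0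
  · rw [if_pos hc, if_pos hc]; rfl
  · rw [if_neg hc, if_neg hc]

lemma quad_aux {a b c x y z : ℝ} (hxy : x < y) (hyz : y < z)
    (h1 : a*x^2 + b*x + c = 0) (h2 : a*y^2 + b*y + c = 0) (h3 : a*z^2 + b*z + c = 0) :
    a = 0 ∧ b = 0 ∧ c = 0 := by
  have e1 : (x - y) * (a*(x+y) + b) = 0 := by linear_combination h1 - h2
  have e2 : (y - z) * (a*(y+z) + b) = 0 := by linear_combination h2 - h3
  have f1 : a*(x+y) + b = 0 := by
    rcases mul_eq_zero.1 e1 with h | h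
    · exact absurd h (by linarith)
    · exact h
  have f2 : a*(y+z) + b = 0 := by
    rcases mul_eq_zero.1 e2 with h | h
    · exact absurd h (by linarith)
    · exact h
  have ha : a = 0 := by
    have h : a * (x - z) = 0 := by linear_combination f1 - f2
    rcases mul_eq_zero.1 h with h | h
    · exact h
    · exact absurd h (by linarith)
  refine ⟨ha, ?_, ?_⟩
  · rw [ha] at f1; linarith
  · have hbz : b = 0 := by rw [ha] at f1; linarith
    rw [ha, hbz] at h1; linarith

set_option maxHeartbeats 1000000 in
/-- Weak representation capacity of shallow LN-Nets: for every shallow LN-Net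
`f : ℝ → ℝ` of width `n_s ≥ 2`, the uniform distance of `f` from `x ↦ cos (π x)`
on `[−2, 2]` is at least `1`. -/
theorem shallow_LNNet_far_from_cos (ns : ℕ) (hns : 2 ≤ ns)
    (W₁ b₁ W₂ : Fin ns → ℝ) (b₂ : ℝ) :
    1 ≤ sSup ((fun x : ℝ =>
        |(∑ j, W₂ j * LN (fun i => W₁ i * x + b₁ i) j) + b₂ - Real.cos (Real.pi * x)|) ''
      Set.Icc (-2 : ℝ) 2) := by
  by_contra hcon
  push_neg at hcon
  have hn0 : (0:ℝ) < (ns:ℝ) := by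
    have : 0 < ns := by omega
    exact_mod_cast this
  set Wm : ℝ := (∑ i, W₁ i) / (ns:ℝ) with hWm
  set bm : ℝ := (∑ i, b₁ i) / (ns:ℝ) with hbm
  set u : Fin ns → ℝ := fun i => W₁ i - Wm with hu
  set v : Fin ns → ℝ := fun i => b₁ i - bm with hv
  set A : ℝ := ∑ i, (u i)^2 with hA
  set B : ℝ := ∑ i, u i * v i with hB
  set C : ℝ := ∑ i, (v i)^2 with hC
  set a : ℝ := ∑ i, W₂ i * u i with ha
  set b : ℝ := ∑ i, W₂ i * v i with hb
  set Q : ℝ → ℝ := fun x => A*x^2 + 2*B*x + C with hQ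
  set f : ℝ → ℝ := fun x => (∑ j, W₂ j * LN (fun i => W₁ i * x + b₁ i) j) + b₂ with hfdef
  -- mean
  have hmu : ∀ x : ℝ, (∑ i, (W₁ i * x + b₁ i)) / (ns:ℝ) = Wm * x + bm := by
    intro x
    rw [Finset.sum_add_distrib, ← Finset.sum_mul, hWm, hbm]
    ring
  have hsub : ∀ (x : ℝ) (i : Fin ns), W₁ i * x + b₁ i - (Wm * x + bm) = u i * x + v i := by
    intro x i; simp only [hu, hv]; ring
  have hQsum : ∀ x : ℝ, ∑ i, (u i * x + v i)^2 = Q x := by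
    intro x
    simp only [hQ, hA, hB, hC]
    rw [Finset.sum_mul, Finset.mul_sum, Finset.sum_mul, ← Finset.sum_add_distrib,
      ← Finset.sum_add_distrib]
    exact Finset.sum_congr rfl fun i _ => by ring
  have hQnonneg : ∀ x : ℝ, 0 ≤ Q x := fun x =>
    (hQsum x) ▸ Finset.sum_nonneg fun i _ => sq_nonneg _
  have hLsum : ∀ x : ℝ, ∑ j, W₂ j * (u j * x + v j) = a*x + b := by
    intro x
    simp only [ha, hb]
    rw [Finset.sum_mul, ← Finset.sum_add_distrib]
    exact Finset.sum_congr rfl fun j _ => by ring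
  have hsig : ∀ x : ℝ, Real.sqrt (Q x / (ns:ℝ)) = 0 ↔ Q x = 0 := by
    intro x
    rw [Real.sqrt_eq_zero']
    constructor
    · intro h
      have h2 : Q x ≤ 0 := by
        by_contra hq
        push_neg at hq
        have : 0 < Q x / (ns:ℝ) := div_pos hq hn0
        linarith
      linarith [hQnonneg x]
    · intro h; rw [h, zero_div]
  have hLN : ∀ (x : ℝ) (j : Fin ns), LN (fun i => W₁ i * x + b₁ i) j =
      if Real.sqrt (Q x / (ns:ℝ)) = 0 then 0
      else (u j * x + v j) / Real.sqrt (Q x / (ns:ℝ)) := by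
    intro x j
    rw [LN_apply]
    simp only [hmu x, hsub x]
    rw [hQsum x]
  have hfx : ∀ x : ℝ, f x =
      if Q x = 0 then b₂ else (a*x + b) / Real.sqrt (Q x / (ns:ℝ)) + b₂ := by
    intro x
    simp only [hfdef]
    by_cases hq : Q x = 0
    · rw [if_pos hq]
      have hs : Real.sqrt (Q x / (ns:ℝ)) = 0 := (hsig x).2 hq
      simp [hLN, hs]
    · rw [if_neg hq]
      have hs : Real.sqrt (Q x / (ns:ℝ)) ≠ 0 := fun h => hq ((hsig x).1 h)
      simp only [hLN, if_neg hs]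
      rw [show (∑ j, W₂ j * ((u j * x + v j) / Real.sqrt (Q x / (ns:ℝ))))
          = (∑ j, W₂ j * (u j * x + v j)) / Real.sqrt (Q x / (ns:ℝ)) by
        rw [Finset.sum_div]; exact Finset.sum_congr rfl fun j _ => by rw [mul_div_assoc]]
      rw [hLsum x]
  -- boundedness
  have hLNsq : ∀ x : ℝ, ∑ j, (LN (fun i => W₁ i * x + b₁ i) j)^2 ≤ (ns:ℝ) := by
    intro x
    by_cases hs : Real.sqrt (Q x / (ns:ℝ)) = 0
    · simp only [hLN, if_pos hs]
      simp
    · have hQxpos : 0 < Q x :=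
        lt_of_le_of_ne (hQnonneg x) fun h => hs ((hsig x).2 h.symm)
      simp only [hLN, if_neg hs, div_pow]
      rw [← Finset.sum_div, hQsum x,
        Real.sq_sqrt (div_nonneg (hQnonneg x) hn0.le)]
      rw [div_div_eq_mul_div, mul_comm, mul_div_assoc, div_self hQxpos.ne', mul_one]
  have hfbound : ∀ x : ℝ, |f x - b₂| ≤ Real.sqrt (∑ j, (W₂ j)^2) * Real.sqrt (ns:ℝ) := by
    intro x
    have hW2 : (0:ℝ) ≤ ∑ j, (W₂ j)^2 := Finset.sum_nonneg fun j _ => sq_nonneg _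
    have h1 : (f x - b₂)^2 ≤ (∑ j, (W₂ j)^2) * ∑ j, (LN (fun i => W₁ i * x + b₁ i) j)^2 := by
      have he : f x - b₂ = ∑ j, W₂ j * LN (fun i => W₁ i * x + b₁ i) j := by
        simp only [hfdef]; ring
      rw [he]
      exact Finset.sum_mul_sq_le_sq_mul_sq _ _ _
    have h2 : (f x - b₂)^2 ≤ (∑ j, (W₂ j)^2) * (ns:ℝ) :=
      h1.trans (mul_le_mul_of_nonneg_left (hLNsq x) hW2)
    calc |f x - b₂| = Real.sqrt ((f x - b₂)^2) := (Real.sqrt_sq_eq_abs _).symm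
      _ ≤ Real.sqrt ((∑ j, (W₂ j)^2) * (ns:ℝ)) := Real.sqrt_le_sqrt h2
      _ = _ := Real.sqrt_mul hW2 _
  have hbdd : BddAbove ((fun x : ℝ =>
      |(∑ j, W₂ j * LN (fun i => W₁ i * x + b₁ i) j) + b₂ - Real.cos (Real.pi * x)|) ''
      Set.Icc (-2 : ℝ) 2) := by
    refine ⟨Real.sqrt (∑ j, (W₂ j)^2) * Real.sqrt (ns:ℝ) + |b₂| + 1, ?_⟩
    rintro y ⟨x, hx, rfl⟩
    have he : (∑ j, W₂ j * LN (fun i => W₁ i * x + b₁ i) j) + b₂ = f x := by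
      simp only [hfdef]
    simp only [he]
    obtain ⟨hl1, hr1⟩ := abs_le.1 (hfbound x)
    obtain ⟨hl2, hr2⟩ := abs_le.1 (Real.abs_cos_le_one (Real.pi * x))
    exact abs_le.2 ⟨by linarith [neg_abs_le b₂], by linarith [le_abs_self b₂]⟩
  have hcon' : ∀ x ∈ Set.Icc (-2:ℝ) 2, |f x - Real.cos (Real.pi * x)| < 1 := by
    intro x hx
    have hmem := le_csSup hbdd (Set.mem_image_of_mem _ hx)
    have he : (∑ j, W₂ j * LN (fun i => W₁ i * x + b₁ i) j) + b₂ = f x := by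
      simp only [hfdef]
    rw [he] at hmem
    linarith
  -- sign facts
  have hm1 : f (-1) < 0 := by
    have h := hcon' (-1) (by norm_num)
    rw [show Real.pi * (-1) = -Real.pi by ring, Real.cos_neg, Real.cos_pi, abs_lt] at h
    linarith [h.2]
  have h00 : 0 < f 0 := by
    have h := hcon' 0 (by norm_num)
    rw [mul_zero, Real.cos_zero, abs_lt] at h
    linarith [h.1]
  have hp1 : f 1 < 0 := by
    have h := hcon' 1 (by norm_num)
    rw [mul_one, Real.cos_pi, abs_lt] at h
    linarith [h.2]
  have hp2 : 0 < f 2 := by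
    have h := hcon' 2 (by norm_num)
    rw [show Real.pi * 2 = 2*Real.pi by ring, Real.cos_two_pi, abs_lt] at h
    linarith [h.1]
  -- main case split
  by_cases hex : ∃ x₀ : ℝ, ∀ i, u i * x₀ + v i = 0
  · obtain ⟨x₀, hx₀⟩ := hex
    have hveq : ∀ i, v i = -(u i * x₀) := fun i => by linarith [hx₀ i]
    have hQform : ∀ x : ℝ, Q x = A * (x - x₀)^2 := by
      intro x
      rw [← hQsum x, hA, Finset.sum_mul]
      exact Finset.sum_congr rfl fun i _ => by rw [hveq i]; ring
    have hbeq : b = -(a * x₀) := by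
      calc b = ∑ i, W₂ i * v i := hb
        _ = ∑ i, -(W₂ i * u i * x₀) := Finset.sum_congr rfl fun i _ => by rw [hveq i]; ring
        _ = -(a * x₀) := by rw [Finset.sum_neg_distrib, ← Finset.sum_mul, ← ha]
    by_cases hA0 : A = 0
    · have hQz : ∀ x : ℝ, Q x = 0 := fun x => by rw [hQform x, hA0]; ring
      have e1 : f (-1) = b₂ := by rw [hfx, if_pos (hQz _)]
      have e2 : f 0 = b₂ := by rw [hfx, if_pos (hQz _)]
      linarith
    · have hApos : 0 < A :=
        lt_of_le_of_ne (hA ▸ Finset.sum_nonneg fun i _ => sq_nonneg _) (Ne.symm hA0)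
      have hsA : 0 < Real.sqrt (A / (ns:ℝ)) := Real.sqrt_pos.2 (div_pos hApos hn0)
      set c : ℝ := a / Real.sqrt (A / (ns:ℝ)) with hc
      have hplus : ∀ x : ℝ, x₀ < x → f x = c + b₂ := by
        intro x hxx
        have hq : Q x ≠ 0 := by
          rw [hQform]
          have h2 : 0 < (x - x₀)^2 := by nlinarith
          exact ne_of_gt (mul_pos hApos h2)
        rw [hfx, if_neg hq, hQform]
        have hsqrt : Real.sqrt (A*(x-x₀)^2 / (ns:ℝ)) = Real.sqrt (A/(ns:ℝ)) * (x - x₀) := by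
          rw [show A*(x-x₀)^2/(ns:ℝ) = (A/(ns:ℝ)) * (x-x₀)^2 by ring,
            Real.sqrt_mul (div_pos hApos hn0).le, Real.sqrt_sq (by linarith)]
        rw [hsqrt, hbeq, hc]
        have hx0 : x - x₀ ≠ 0 := sub_ne_zero.2 (ne_of_gt hxx)
        field_simp
        ring
      have hminus : ∀ x : ℝ, x < x₀ → f x = -c + b₂ := by
        intro x hxx
        have hq : Q x ≠ 0 := by
          rw [hQform]
          have h2 : 0 < (x - x₀)^2 := by nlinarith
          exact ne_of_gt (mul_pos hApos h2)
        rw [hfx, if_neg hq, hQform]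
        have hsqrt : Real.sqrt (A*(x-x₀)^2 / (ns:ℝ)) = Real.sqrt (A/(ns:ℝ)) * (x₀ - x) := by
          rw [show A*(x-x₀)^2/(ns:ℝ) = (A/(ns:ℝ)) * (x-x₀)^2 by ring,
            Real.sqrt_mul (div_pos hApos hn0).le, Real.sqrt_sq_eq_abs,
            abs_of_neg (by linarith : x - x₀ < 0)]
          ring
        rw [hsqrt, hbeq, hc]
        have hx0 : x₀ - x ≠ 0 := sub_ne_zero.2 (ne_of_gt hxx)
        field_simp
        ring
      rcases lt_trichotomy x₀ 0 with h | h | h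
      · have e1 := hplus 0 h
        have e2 := hplus 1 (by linarith)
        linarith
      · have e0 : f 0 = b₂ := by
          rw [hfx, if_pos]
          rw [hQform, h]; ring
        have e1 := hminus (-1) (by rw [h]; norm_num)
        have e2 := hplus 1 (by rw [h]; norm_num)
        linarith
      · have e1 := hminus (-1) (by linarith)
        have e2 := hminus 0 h
        linarith
  · -- nondegenerate case: Q > 0 everywhere
    have hQpos : ∀ x : ℝ, 0 < Q x := by
      intro x
      rcases (hQnonneg x).lt_or_eq with h | h
      · exact h
      · exfalso
        apply hex
        refine ⟨x, fun i => ?_⟩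
        have hsum0 : ∑ i, (u i * x + v i)^2 = 0 := by rw [hQsum x, ← h]
        have hz := (Finset.sum_eq_zero_iff_of_nonneg
          (fun i _ => sq_nonneg (u i * x + v i))).1 hsum0 i (Finset.mem_univ i)
        exact pow_eq_zero_iff (by norm_num) |>.1 hz
    set g : ℝ → ℝ := fun x => (a*x+b)/Real.sqrt (Q x / (ns:ℝ)) + b₂ with hgdef
    have hfg : ∀ x : ℝ, f x = g x := by
      intro x
      rw [hfx x, if_neg (hQpos x).ne']
    have hQc : Continuous Q := by
      rw [hQ]; fun_prop
    have hgc : Continuous g := by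
      rw [hgdef]
      have h1 : Continuous fun x : ℝ => Real.sqrt (Q x / (ns:ℝ)) :=
        Real.continuous_sqrt.comp (hQc.div_const _)
      refine Continuous.add ?_ continuous_const
      exact Continuous.div (by fun_prop) h1
        fun x => (Real.sqrt_pos.2 (div_pos (hQpos x) hn0)).ne'
    have hg1 : g (-1) < 0 := hfg (-1) ▸ hm1
    have hg0 : 0 < g 0 := hfg 0 ▸ h00
    have hgp1 : g 1 < 0 := hfg 1 ▸ hp1
    have hgp2 : 0 < g 2 := hfg 2 ▸ hp2
    have hroot : ∀ r : ℝ, g r = 0 →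
        ((ns:ℝ)*a^2 - b₂^2*A)*r^2 + (2*((ns:ℝ)*a*b - b₂^2*B))*r + ((ns:ℝ)*b^2 - b₂^2*C) = 0 := by
      intro r hr
      have hs : 0 < Real.sqrt (Q r / (ns:ℝ)) := Real.sqrt_pos.2 (div_pos (hQpos r) hn0)
      simp only [hgdef] at hr
      have h1 : a*r+b = -b₂ * Real.sqrt (Q r/(ns:ℝ)) := by
        have hd : (a*r+b)/Real.sqrt (Q r/(ns:ℝ)) = -b₂ := by linarith
        rw [div_eq_iff hs.ne'] at hd
        rw [hd]
      have h2 : (a*r+b)^2 = b₂^2 * (Q r / (ns:ℝ)) := by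
        rw [h1, mul_pow, Real.sq_sqrt (div_nonneg (hQnonneg r) hn0.le)]
        ring
      have h3 : (ns:ℝ) * (a*r+b)^2 = b₂^2 * Q r := by
        rw [h2]; field_simp
      have hQr : Q r = A*r^2 + 2*B*r + C := by simp only [hQ]
      rw [hQr] at h3
      linear_combination h3
    have hr1 : ∃ r ∈ Set.Ioo (-1:ℝ) 0, g r = 0 := by
      have hsub := intermediate_value_Ioo (by norm_num : (-1:ℝ) ≤ 0) hgc.continuousOn
      obtain ⟨r, hr, hr0⟩ := hsub ⟨hg1, hg0⟩
      exact ⟨r, hr, hr0⟩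
    have hr2 : ∃ r ∈ Set.Ioo (0:ℝ) 1, g r = 0 := by
      have hsub := intermediate_value_Ioo' (by norm_num : (0:ℝ) ≤ 1) hgc.continuousOn
      obtain ⟨r, hr, hr0⟩ := hsub ⟨hgp1, hg0⟩
      exact ⟨r, hr, hr0⟩
    have hr3 : ∃ r ∈ Set.Ioo (1:ℝ) 2, g r = 0 := by
      have hsub := intermediate_value_Ioo (by norm_num : (1:ℝ) ≤ 2) hgc.continuousOn
      obtain ⟨r, hr, hr0⟩ := hsub ⟨hgp1, hgp2⟩
      exact ⟨r, hr, hr0⟩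
    obtain ⟨r1, hr1m, hr1z⟩ := hr1
    obtain ⟨r2, hr2m, hr2z⟩ := hr2
    obtain ⟨r3, hr3m, hr3z⟩ := hr3
    obtain ⟨hca, hcb, hcc⟩ := quad_aux
      (show r1 < r2 by exact lt_trans hr1m.2 hr2m.1)
      (show r2 < r3 by exact lt_trans hr2m.2 hr3m.1)
      (hroot r1 hr1z) (hroot r2 hr2z) (hroot r3 hr3z)
    by_cases hb2 : b₂ = 0
    · rw [hb2] at hca hcc
      have ha0 : a = 0 := by
        have hasq : (ns:ℝ) * a^2 = 0 := by linarith [hca]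
        rcases mul_eq_zero.1 hasq with h | h
        · exact absurd h hn0.ne'
        · exact sq_eq_zero_iff.1 h
      have hb0 : b = 0 := by
        have hbsq : (ns:ℝ) * b^2 = 0 := by linarith [hcc]
        rcases mul_eq_zero.1 hbsq with h | h
        · exact absurd h hn0.ne'
        · exact sq_eq_zero_iff.1 h
      have : g 0 = 0 := by
        simp only [hgdef]
        rw [ha0, hb0, hb2]
        simp
      linarith
    · have hb2sq : 0 < b₂^2 := by positivity
      have ha0 : a = 0 := by
        by_contra hane
        have hid : ∀ x : ℝ, (ns:ℝ)*(a*x+b)^2 = b₂^2*(A*x^2+2*B*x+C) := by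
          intro x
          linear_combination x^2*hca + x*hcb + hcc
        have hx := hid (-b/a)
        have hz : a*(-b/a)+b = 0 := by field_simp; ring
        rw [hz] at hx
        have hQv : Q (-b/a) = A*(-b/a)^2 + 2*B*(-b/a) + C := by simp only [hQ]
        have hp := hQpos (-b/a)
        have h4 : b₂^2 * Q (-b/a) = 0 := by
          rw [hQv]
          linarith [hx]
        rcases mul_eq_zero.1 h4 with h | h
        · exact absurd h hb2sq.ne'
        · exact absurd h hp.ne'
      have hAz : A = 0 := by
        rw [ha0] at hca
        have : b₂^2 * A = 0 := by linarith
        rcases mul_eq_zero.1 this with h | h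
        · exact absurd h hb2sq.ne'
        · exact h
      have hBz : B = 0 := by
        rw [ha0] at hcb
        have : b₂^2 * B = 0 := by linarith
        rcases mul_eq_zero.1 this with h | h
        · exact absurd h hb2sq.ne'
        · exact h
      have e1 : g (-1) = g 0 := by
        simp only [hgdef, hQ]
        rw [ha0, hAz, hBz]
        norm_num
      rw [e1] at hg1
      exact lt_irrefl _ (hg1.trans hg0)
end

section
/- Let n_s ≥ 3 and φ(x) = x/√(x²+1) applied elementwise. For every shallow φ-network f̂ of width N from ℝ^d to ℝ^m, i.e. f̂(x) = Ŵ₂ φ(Ŵ₁ x + b̂₁) + b̂₂ with Ŵ₁ ∈ ℝ^{N×d}, b̂₁ ∈ ℝ^N, Ŵ₂ ∈ ℝ^{m×N}, b̂₂ ∈ ℝ^m, there exists a shallow PLN-Net f of norm size n_s and width n_s·N from ℝ^d to ℝ^m such that f(x) = f̂(x) for all x ∈ ℝ^d. -/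
/-- Parallel layer normalization: `h ∈ ℝ^{n_s·N}` is split into `N` consecutive blocks of
size `n_s` and `LN` is applied to each block. -/
noncomputable def PLN (ns N : ℕ) (h : Fin (N * ns) → ℝ) : Fin (N * ns) → ℝ :=
  fun i => LN (fun j : Fin ns => h (finProdFinEquiv (i.divNat, j))) i.modNat

noncomputable def cf (ns : ℕ) (j : Fin ns) : ℝ :=
  if j.val = 0 then 1 else if j.val = 1 then -(1/2) else if j.val = 2 then -(1/2) else 0

noncomputable def sf (ns : ℕ) (j : Fin ns) : ℝ :=
  if j.val = 1 then Real.sqrt 3 / 2 else if j.val = 2 then -(Real.sqrt 3 / 2) else 0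

lemma sum3 {ns : ℕ} (hns : 3 ≤ ns) (g : Fin ns → ℝ)
    (hg : ∀ j : Fin ns, 3 ≤ j.val → g j = 0) :
    ∑ j, g j = g ⟨0, by omega⟩ + g ⟨1, by omega⟩ + g ⟨2, by omega⟩ := by
  classical
  have hsub : ∑ j, g j
      = ∑ j ∈ ({⟨0, by omega⟩, ⟨1, by omega⟩, ⟨2, by omega⟩} : Finset (Fin ns)), g j := by
    refine (Finset.sum_subset (Finset.subset_univ _) ?_).symm
    intro x _ hx
    apply hg
    simp only [Finset.mem_insert, Finset.mem_singleton, Fin.ext_iff] at hx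
    omega
  rw [hsub, Finset.sum_insert (by simp [Fin.ext_iff]),
    Finset.sum_insert (by simp [Fin.ext_iff]), Finset.sum_singleton]
  ring

lemma LN_block {ns : ℕ} (hns : 3 ≤ ns) (a : ℝ) (j0 : Fin ns) (hj0 : j0.val = 0) :
    Real.sqrt (3 / (2 * ns)) * LN (fun j => cf ns j * a + sf ns j) j0 = phi a := by
  have hns0 : (0:ℝ) < (ns:ℝ) := by
    have : 0 < ns := by omega
    exact_mod_cast this
  have h3 : Real.sqrt 3 ^ 2 = 3 := Real.sq_sqrt (by norm_num)
  set b : Fin ns → ℝ := fun j => cf ns j * a + sf ns j with hb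
  have hzero : ∀ j : Fin ns, 3 ≤ j.val → b j = 0 := by
    intro j hj
    simp only [hb, cf, sf]
    rw [if_neg (by omega), if_neg (by omega), if_neg (by omega), if_neg (by omega),
      if_neg (by omega)]
    ring
  have hsum : ∑ j, b j = 0 := by
    rw [sum3 hns b hzero]
    simp only [hb, cf, sf]
    norm_num
    ring
  have hμ : (∑ j, b j) / (ns:ℝ) = 0 := by rw [hsum]; simp
  have hsq : (∑ j, (b j - (∑ i, b i) / (ns:ℝ)) ^ 2) = 3/2 * (a^2+1) := by
    rw [hμ]
    simp only [sub_zero]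
    rw [sum3 hns (fun j => b j ^ 2) (fun j hj => by show b j ^ 2 = 0; rw [hzero j hj]; ring)]
    simp only [hb, cf, sf]
    norm_num
    nlinarith [h3, sq_nonneg a]
  have hb0 : b j0 = a := by
    simp only [hb, cf, sf, hj0]
    norm_num
  have hσ : Real.sqrt ((∑ j, (b j - (∑ i, b i) / (ns:ℝ)) ^ 2) / ns)
      = Real.sqrt (3 / (2 * ns)) * Real.sqrt (a^2+1) := by
    rw [hsq, ← Real.sqrt_mul (by positivity)]
    congr 1
    field_simp
    try ring
  have hσne : Real.sqrt ((∑ j, (b j - (∑ i, b i) / (ns:ℝ)) ^ 2) / ns) ≠ 0 := by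
    rw [hσ]
    positivity
  rw [LN]
  simp only [if_neg hσne]
  rw [hμ] at hsq ⊢
  simp only [sub_zero] at hsq ⊢
  rw [hb0, hsq]
  rw [show (3/2 * (a^2+1)) / (ns:ℝ) = (3 / (2*ns)) * (a^2+1) by field_simp; try ring]
  rw [Real.sqrt_mul (by positivity) (a^2+1), phi]
  have h1 : Real.sqrt (3 / (2 * (ns:ℝ))) ≠ 0 := by positivity
  have h2 : Real.sqrt (a^2+1) ≠ 0 := by positivity
  field_simp

lemma divNat_prod {M n : ℕ} (k : Fin M) (j : Fin n) : (finProdFinEquiv (k, j)).divNat = k := by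
  have h := finProdFinEquiv.symm_apply_apply (k, j)
  rw [finProdFinEquiv_symm_apply] at h
  exact congrArg Prod.fst h

lemma modNat_prod {M n : ℕ} (k : Fin M) (j : Fin n) : (finProdFinEquiv (k, j)).modNat = j := by
  have h := finProdFinEquiv.symm_apply_apply (k, j)
  rw [finProdFinEquiv_symm_apply] at h
  exact congrArg Prod.snd h

/-- Every shallow `φ`-network of width `N` from `ℝ^d` to `ℝ^m`, with `φ(x) = x/√(x²+1)`,
is exactly realized by a shallow PLN-Net of norm size `n_s ≥ 3` and width `n_s·N`. -/
theorem shallow_PLNNet_represents_phiNet (ns N d m : ℕ) (hns : 3 ≤ ns)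
    (Wh₁ : Matrix (Fin N) (Fin d) ℝ) (bh₁ : Fin N → ℝ)
    (Wh₂ : Matrix (Fin m) (Fin N) ℝ) (bh₂ : Fin m → ℝ) :
    ∃ (W₁ : Matrix (Fin (N * ns)) (Fin d) ℝ) (b₁ : Fin (N * ns) → ℝ)
      (W₂ : Matrix (Fin m) (Fin (N * ns)) ℝ) (b₂ : Fin m → ℝ),
      ∀ x : Fin d → ℝ,
        W₂.mulVec (PLN ns N (W₁.mulVec x + b₁)) + b₂
          = Wh₂.mulVec (fun i => phi ((Wh₁.mulVec x + bh₁) i)) + bh₂ := by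
  classical
  set r : ℝ := Real.sqrt (3 / (2 * ns)) with hr
  set W1 : Matrix (Fin (N * ns)) (Fin d) ℝ :=
    fun i j => cf ns i.modNat * Wh₁ i.divNat j with hW1
  set B1 : Fin (N * ns) → ℝ :=
    fun i => cf ns i.modNat * bh₁ i.divNat + sf ns i.modNat with hB1
  set W2 : Matrix (Fin m) (Fin (N * ns)) ℝ :=
    fun i l => if l.modNat.val = 0 then r * Wh₂ i l.divNat else 0 with hW2
  refine ⟨W1, B1, W2, bh₂, ?_⟩
  intro x
  set a : Fin N → ℝ := Wh₁.mulVec x + bh₁ with ha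
  have hpre : ∀ i : Fin (N * ns),
      (W1.mulVec x + B1) i = cf ns i.modNat * a i.divNat + sf ns i.modNat := by
    intro i
    simp only [Pi.add_apply, Matrix.mulVec, dotProduct, ha, hW1, hB1]
    simp only [mul_add, Finset.mul_sum, mul_assoc]
    ring
  funext i
  simp only [Pi.add_apply]
  congr 1
  simp only [Matrix.mulVec, dotProduct]
  rw [← Equiv.sum_comp (finProdFinEquiv : Fin N × Fin ns ≃ Fin (N * ns))
      (fun l => W2 i l * PLN ns N (W1.mulVec x + B1) l)]
  rw [Fintype.sum_prod_type]
  apply Finset.sum_congr rfl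
  intro k _
  rw [Finset.sum_eq_single (⟨0, by omega⟩ : Fin ns)]
  · simp only [hW2]
    rw [modNat_prod, divNat_prod]
    have hPLN : PLN ns N (W1.mulVec x + B1) (finProdFinEquiv (k, ⟨0, by omega⟩))
        = LN (fun j : Fin ns => cf ns j * a k + sf ns j) ⟨0, by omega⟩ := by
      rw [PLN, divNat_prod, modNat_prod]
      congr 1
      funext j
      rw [hpre, modNat_prod, divNat_prod]
    rw [hPLN, if_pos rfl, mul_comm r (Wh₂ i k), mul_assoc, hr,
      LN_block hns (a k) ⟨0, by omega⟩ rfl]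
  · intro j _ hj
    simp only [hW2]
    rw [modNat_prod]
    rw [if_neg (by simpa [Fin.ext_iff] using hj)]
    ring
  · intro h
    exact absurd (Finset.mem_univ _) h
end

section
/- Let L > 0, ε > 0, and let f̂: [0,1] → ℝ be L-Lipschitz continuous. Let n_s ≥ 2 and N = ⌊L/(2ε)⌋ + 1. Then there exists a shallow PLN-Net f of norm size n_s and width n_s·N from ℝ to ℝ such that sup_{x ∈ [0,1]} |f(x) − f̂(x)| < ε. -/
/-!
On `[0, 1]`, `f` is within `L / (2N)` of the step function that takes the value of `f` at the
midpoint of each cell `[k/N, (k+1)/N]`: at every `x` the step function is a convex combination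
of midpoint samples taken within distance `1/(2N)` of `x`. A step function with `N - 1` jumps is a
sum of `N` terms `b_k · sign (x - t_k)` plus a constant, and one block of a PLN-net produces such a
term: `LN` is scale-invariant up to sign, so on the block `(x - t_k) • d` for a non-constant
`d ∈ ℝ^{n_s}` it outputs `sign (x - t_k) • LN d`.
-/

open Finset

namespace LN

variable {n : ℕ}

noncomputable def mean (h : Fin n → ℝ) : ℝ := (∑ i, h i) / n

noncomputable def std (h : Fin n → ℝ) : ℝ := √((∑ i, (h i - mean h) ^ 2) / n)

theorem mean_smul (t : ℝ) (h : Fin n → ℝ) : mean (t • h) = t * mean h := by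
  simp only [mean, Pi.smul_apply, smul_eq_mul, ← mul_sum, mul_div_assoc]

theorem std_smul (t : ℝ) (h : Fin n → ℝ) : std (t • h) = |t| * std h := by
  simp only [std, mean_smul, Pi.smul_apply, smul_eq_mul, ← mul_sub, mul_pow, ← mul_sum,
    mul_div_assoc, Real.sqrt_mul (sq_nonneg t), Real.sqrt_sq_eq_abs]

theorem eq_mean_of_std_eq_zero {h : Fin n → ℝ} (hσ : std h = 0) (i : Fin n) : h i = mean h := by
  have hn : (0 : ℝ) < n := by exact_mod_cast i.pos
  rw [std, Real.sqrt_eq_zero', div_le_iff₀ hn, zero_mul] at hσ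
  have := (sum_eq_zero_iff_of_nonneg fun j _ => sq_nonneg (h j - mean h)).1
    (hσ.antisymm (sum_nonneg fun j _ => sq_nonneg _)) i (mem_univ i)
  exact sub_eq_zero.1 (pow_eq_zero_iff two_ne_zero |>.1 this)

theorem std_ne_zero_of_ne {h : Fin n → ℝ} {i j : Fin n} (hij : h i ≠ h j) : std h ≠ 0 :=
  fun hσ => hij ((eq_mean_of_std_eq_zero hσ i).trans (eq_mean_of_std_eq_zero hσ j).symm)

end LN

theorem LN_eq {n : ℕ} (h : Fin n → ℝ) :
    LN h = if LN.std h = 0 then 0 else fun j => (h j - LN.mean h) / LN.std h :=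
  rfl

theorem LN_smul {n : ℕ} (t : ℝ) (h : Fin n → ℝ) : LN (t • h) = Real.sign t • LN h := by
  rcases eq_or_ne t 0 with rfl | ht
  · rw [LN_eq, LN.std_smul]
    simp
  by_cases hσ : LN.std h = 0
  · simp [LN_eq, LN.std_smul, hσ]
  ext j
  simp only [LN_eq, LN.std_smul, LN.mean_smul, hσ, ht, abs_eq_zero, mul_eq_zero, or_self,
    if_false, Pi.smul_apply, smul_eq_mul, ← mul_sub]
  rcases ht.lt_or_gt with ht | ht
  · rw [Real.sign_of_neg ht, abs_of_neg ht]
    field_simp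
  · rw [Real.sign_of_pos ht, abs_of_pos ht]
    field_simp

theorem sum_LN_sq {n : ℕ} {h : Fin n → ℝ} (hσ : LN.std h ≠ 0) : ∑ j, LN h j ^ 2 = n := by
  have hS : (∑ j, (h j - LN.mean h) ^ 2) / n ≠ 0 := by
    rintro hS
    exact hσ (by rw [LN.std, hS, Real.sqrt_zero])
  have hsq : LN.std h ^ 2 = (∑ j, (h j - LN.mean h) ^ 2) / n :=
    Real.sq_sqrt (div_nonneg (sum_nonneg fun j _ => sq_nonneg _) n.cast_nonneg)
  obtain ⟨hS, hn⟩ := div_ne_zero_iff.1 hS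
  simp only [LN_eq, hσ, if_false, div_pow, ← sum_div, hsq]
  field_simp

theorem PLN_finProdFinEquiv {ns N : ℕ} (h : Fin (N * ns) → ℝ) (k : Fin N) (j : Fin ns) :
    PLN ns N h (finProdFinEquiv (k, j)) = LN (fun j' => h (finProdFinEquiv (k, j'))) j := by
  have hkj := finProdFinEquiv.symm_apply_apply (k, j)
  simp only [finProdFinEquiv_symm_apply, Prod.mk.injEq] at hkj
  simp only [PLN, hkj]

theorem exists_PLN_eq_sum_sign {ns N : ℕ} (hns : 2 ≤ ns) (b t : Fin N → ℝ) :
    ∃ w₁ c₁ w₂ : Fin (N * ns) → ℝ, ∀ x : ℝ,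
      ∑ i, w₂ i * PLN ns N (fun i' => w₁ i' * x + c₁ i') i = ∑ k, b k * Real.sign (x - t k) := by
  set d : Fin ns → ℝ := fun j => j
  have hd : LN.std d ≠ 0 :=
    LN.std_ne_zero_of_ne (i := ⟨0, by omega⟩) (j := ⟨1, by omega⟩) (by simp [d])
  -- Block `k` computes `LN ((x - t k) • d) = sign (x - t k) • LN d`, read out against `LN d / ns`.
  refine ⟨fun i => d (finProdFinEquiv.symm i).2,
    fun i => -(t (finProdFinEquiv.symm i).1 * d (finProdFinEquiv.symm i).2),
    fun i => b (finProdFinEquiv.symm i).1 * LN d (finProdFinEquiv.symm i).2 / ns, fun x => ?_⟩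
  rw [← finProdFinEquiv.sum_comp, Fintype.sum_prod_type]
  refine sum_congr rfl fun k _ => ?_
  have hblock : (fun j => d j * x + -(t k * d j)) = (x - t k) • d := by
    ext j
    simp only [Pi.smul_apply, smul_eq_mul]
    ring
  simp only [PLN_finProdFinEquiv, Equiv.symm_apply_apply, hblock, LN_smul]
  calc ∑ j, b k * LN d j / ns * (Real.sign (x - t k) • LN d) j
      = b k * Real.sign (x - t k) * (∑ j, LN d j ^ 2) / ns := by
        simp only [Pi.smul_apply, smul_eq_mul, mul_sum, sum_div]
        exact sum_congr rfl fun j _ => by ring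
    _ = b k * Real.sign (x - t k) := by
        rw [sum_LN_sq hd]
        field_simp

theorem sum_range_mul_sub_succ {R : Type*} [CommRing R] (q H : ℕ → R) (N : ℕ) :
    ∑ k ∈ range N, q k * (H k - H (k + 1))
      = q 0 * H 0 - q N * H N + ∑ k ∈ range N, (q (k + 1) - q k) * H (k + 1) := by
  induction N with
  | zero => simp
  | succ N ih =>
    rw [sum_range_succ, ih, sum_range_succ]
    ring

theorem abs_sum_mul_sub_succ_sub_le {N : ℕ} {q H : ℕ → ℝ} {y δ : ℝ} (h0 : H 0 = 1)
    (hN : H N = 0) (hanti : ∀ k < N, H (k + 1) ≤ H k)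
    (hq : ∀ k < N, H (k + 1) < H k → |q k - y| ≤ δ) :
    |∑ k ∈ range N, q k * (H k - H (k + 1)) - y| ≤ δ := by
  have hsum : ∑ k ∈ range N, (H k - H (k + 1)) = 1 := by
    rw [sum_range_sub', h0, hN, sub_zero]
  calc |∑ k ∈ range N, q k * (H k - H (k + 1)) - y|
      = |∑ k ∈ range N, (q k - y) * (H k - H (k + 1))| := by
        simp only [sub_mul, sum_sub_distrib, ← mul_sum, hsum, mul_one]
    _ ≤ ∑ k ∈ range N, |q k - y| * (H k - H (k + 1)) := by
        refine (abs_sum_le_sum_abs _ _).trans_eq (sum_congr rfl fun k hk => ?_)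
        rw [abs_mul, abs_of_nonneg (sub_nonneg.2 (hanti k (mem_range.1 hk)))]
    _ ≤ ∑ k ∈ range N, δ * (H k - H (k + 1)) := by
        refine sum_le_sum fun k hk => ?_
        rw [mem_range] at hk
        rcases (hanti k hk).lt_or_eq with hlt | heq
        · exact mul_le_mul_of_nonneg_right (hq k hk hlt) (sub_nonneg.2 hlt.le)
        · simp [heq]
    _ = δ := by rw [← mul_sum, hsum, mul_one]

section StepApproximation

variable (f : ℝ → ℝ) (N : ℕ)

noncomputable def midSample (k : ℕ) : ℝ := f ((2 * k + 1) / (2 * N))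

noncomputable def stepCoeff (k : ℕ) : ℝ :=
  if k + 1 < N then (midSample f N (k + 1) - midSample f N k) / 2 else 0

/-- The step function sampling `f` at the midpoints of the `N` cells of `[0, 1]`; at a breakpoint
it takes the mean of the two neighbouring samples since `Real.sign 0 = 0`. -/
noncomputable def stepApprox (x : ℝ) : ℝ :=
  midSample f N 0 + ∑ k ∈ range N, stepCoeff f N k * (1 + Real.sign (x - (k + 1) / N))

/-- The total weight of the samples `k, k + 1, …` in `stepApprox f N x`. -/
noncomputable def stepWeight (x : ℝ) (k : ℕ) : ℝ :=
  if k = 0 then 1 else if N ≤ k then 0 else (1 + Real.sign (x - k / N)) / 2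

variable {f N}

theorem stepWeight_mem_Icc (x : ℝ) (k : ℕ) : stepWeight N x k ∈ Set.Icc 0 1 := by
  unfold stepWeight
  split_ifs
  · simp
  · simp
  · rcases Real.sign_apply_eq (x - k / N) with h | h | h <;> rw [h] <;> norm_num

theorem stepWeight_eq_zero_of_lt {x : ℝ} {k : ℕ} (hx : 0 ≤ x) (hk : x < k / N) :
    stepWeight N x k = 0 := by
  unfold stepWeight
  split_ifs with h0
  · simp [h0] at hk
    linarith
  · rfl
  · rw [Real.sign_of_neg (by linarith)]
    norm_num

theorem stepWeight_eq_one_of_gt {x : ℝ} {k : ℕ} (hN : 0 < N) (hx : x ≤ 1) (hk : k / N < x) :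
    stepWeight N x k = 1 := by
  unfold stepWeight
  split_ifs with h0 hNk
  · rfl
  · have : (1 : ℝ) ≤ k / N := by
      rw [one_le_div (by exact_mod_cast hN)]
      exact_mod_cast hNk
    linarith
  · rw [Real.sign_of_pos (by linarith)]
    norm_num

theorem stepWeight_succ_le {x : ℝ} (hN : 0 < N) (hx : x ∈ Set.Icc 0 1) (k : ℕ) :
    stepWeight N x (k + 1) ≤ stepWeight N x k := by
  rcases lt_or_ge x ((k + 1 : ℕ) / N) with h | h
  · rw [stepWeight_eq_zero_of_lt hx.1 h]
    exact (stepWeight_mem_Icc x k).1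
  · have hk : (k : ℝ) / N < (k + 1 : ℕ) / N := by
      gcongr
      exact_mod_cast k.lt_succ_self
    rw [stepWeight_eq_one_of_gt hN hx.2 (hk.trans_le h)]
    exact (stepWeight_mem_Icc x (k + 1)).2

theorem mem_Icc_of_stepWeight_succ_lt {x : ℝ} {k : ℕ} (hN : 0 < N) (hx : x ∈ Set.Icc 0 1)
    (hlt : stepWeight N x (k + 1) < stepWeight N x k) : x ∈ Set.Icc ((k : ℝ) / N) ((k + 1) / N) := by
  constructor
  · by_contra! h
    rw [stepWeight_eq_zero_of_lt hx.1 h] at hlt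
    linarith [(stepWeight_mem_Icc (N := N) x (k + 1)).1]
  · by_contra! h
    rw [stepWeight_eq_one_of_gt hN hx.2 (by push_cast; exact h)] at hlt
    linarith [(stepWeight_mem_Icc (N := N) x k).2]

theorem stepApprox_eq_sum (hN : 0 < N) (x : ℝ) :
    stepApprox f N x
      = ∑ k ∈ range N, midSample f N k * (stepWeight N x k - stepWeight N x (k + 1)) := by
  have hweight : ∀ k, (midSample f N (k + 1) - midSample f N k) * stepWeight N x (k + 1)
      = stepCoeff f N k * (1 + Real.sign (x - (k + 1) / N)) := by
    intro k
    rcases lt_or_ge (k + 1) N with hlt | hge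
    · simp only [stepWeight, stepCoeff, if_pos hlt, if_neg k.succ_ne_zero, if_neg hlt.not_ge]
      push_cast
      ring
    · simp [stepWeight, stepCoeff, hge, hge.not_gt]
  rw [sum_range_mul_sub_succ, stepApprox, ← sum_congr rfl fun k _ => hweight k]
  simp [stepWeight, hN.ne']

theorem abs_midSample_sub_le {L : ℝ} (hL : 0 ≤ L)
    (hlip : ∀ x ∈ Set.Icc (0 : ℝ) 1, ∀ y ∈ Set.Icc (0 : ℝ) 1, |f x - f y| ≤ L * |x - y|)
    {x : ℝ} {k : ℕ} (hk : k < N) (hx : x ∈ Set.Icc ((k : ℝ) / N) ((k + 1) / N)) :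
    |midSample f N k - f x| ≤ L / (2 * N) := by
  have hN : (0 : ℝ) < N := by exact_mod_cast (k.zero_le.trans_lt hk)
  have hkN : (k : ℝ) + 1 ≤ N := by exact_mod_cast hk
  have hk0 : (0 : ℝ) ≤ k := k.cast_nonneg
  have hmid : (2 * k + 1 : ℝ) / (2 * N) ∈ Set.Icc 0 1 := by
    constructor
    · positivity
    · rw [div_le_one (by positivity)]
      linarith
  have hx01 : x ∈ Set.Icc (0 : ℝ) 1 := by
    obtain ⟨h₁, h₂⟩ := hx
    constructor
    · exact (div_nonneg hk0 hN.le).trans h₁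
    · exact h₂.trans ((div_le_one hN).2 hkN)
  have hdist : |(2 * k + 1 : ℝ) / (2 * N) - x| ≤ 1 / (2 * N) := by
    obtain ⟨h₁, h₂⟩ := hx
    rw [abs_le]
    constructor
    · have : (2 * k + 1 : ℝ) / (2 * N) + 1 / (2 * N) = (k + 1) / N := by field_simp; ring
      linarith
    · have : (2 * k + 1 : ℝ) / (2 * N) - 1 / (2 * N) = k / N := by field_simp; ring
      linarith
  calc |midSample f N k - f x| ≤ L * |(2 * k + 1 : ℝ) / (2 * N) - x| := hlip _ hmid _ hx01
    _ ≤ L * (1 / (2 * N)) := mul_le_mul_of_nonneg_left hdist hL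
    _ = L / (2 * N) := mul_one_div L _

theorem abs_stepApprox_sub_le {L : ℝ} (hL : 0 ≤ L)
    (hlip : ∀ x ∈ Set.Icc (0 : ℝ) 1, ∀ y ∈ Set.Icc (0 : ℝ) 1, |f x - f y| ≤ L * |x - y|)
    (hN : 0 < N) {x : ℝ} (hx : x ∈ Set.Icc 0 1) :
    |stepApprox f N x - f x| ≤ L / (2 * N) := by
  rw [stepApprox_eq_sum hN]
  refine abs_sum_mul_sub_succ_sub_le (by simp [stepWeight]) (by simp [stepWeight, hN.ne'])
    (fun k _ => stepWeight_succ_le hN hx k) fun k hk hlt => ?_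
  exact abs_midSample_sub_le hL hlip hk (mem_Icc_of_stepWeight_succ_lt hN hx hlt)

end StepApproximation

/-- Universal approximation of univariate `L`-Lipschitz functions by shallow PLN-Nets
of norm size `n_s ≥ 2` and width `n_s·N` with `N = ⌊L/(2ε)⌋ + 1`. -/
theorem shallow_PLNNet_approximates_lipschitz (L ε : ℝ) (hL : 0 < L) (hε : 0 < ε)
    (fh : ℝ → ℝ)
    (hlip : ∀ x ∈ Set.Icc (0:ℝ) 1, ∀ y ∈ Set.Icc (0:ℝ) 1, |fh x - fh y| ≤ L * |x - y|)
    (ns : ℕ) (hns : 2 ≤ ns) (N : ℕ) (hN : N = ⌊L / (2 * ε)⌋₊ + 1) :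
    ∃ (w₁ c₁ w₂ : Fin (N * ns) → ℝ) (c₂ : ℝ), ∀ x ∈ Set.Icc (0:ℝ) 1,
      |(∑ i, w₂ i * PLN ns N (fun i' => w₁ i' * x + c₁ i') i) + c₂ - fh x| < ε := by
  have hN0 : 0 < N := hN ▸ Nat.succ_pos _
  have hgap : L / (2 * N) < ε := by
    have : L / (2 * ε) < N := hN ▸ by exact_mod_cast Nat.lt_floor_add_one (L / (2 * ε))
    rw [div_lt_iff₀ (by positivity)] at this ⊢
    linarith
  obtain ⟨w₁, c₁, w₂, hnet⟩ :=
    exists_PLN_eq_sum_sign hns (fun k => stepCoeff fh N k) (fun k => (k + 1 : ℝ) / N)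
  refine ⟨w₁, c₁, w₂, midSample fh N 0 + ∑ k ∈ range N, stepCoeff fh N k, fun x hx => ?_⟩
  have hstep : ∑ k : Fin N, stepCoeff fh N k * Real.sign (x - (k + 1) / N)
      + (midSample fh N 0 + ∑ k ∈ range N, stepCoeff fh N k) = stepApprox fh N x := by
    rw [Fin.sum_univ_eq_sum_range (fun k => stepCoeff fh N k * Real.sign (x - (k + 1) / N))]
    simp only [stepApprox, mul_add, mul_one, sum_add_distrib]
    ring
  rw [hnet, hstep]
  exact (abs_stepApprox_sub_le hL.le hlip hN0 hx).trans_lt hgap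
end

section
/- Let L > 0, ε > 0, let f̂: [0,1] → ℝ be L-Lipschitz continuous, and set N = ⌊L/(2ε)⌋ + 1. Then there exist real numbers α₁, …, α_N and b₁, …, b_N such that sup_{x ∈ [0,1]} |∑_{j=1}^N αⱼ · sign(x + bⱼ) − f̂(x)| < ε. -/
private lemma tel_sum (G : ℕ → ℝ) (n : ℕ) :
    ∑ j ∈ Finset.range n, (G j - G (j-1)) = G (n-1) - G 0 := by
  induction n with
  | zero => simp
  | succ n ih =>
    rw [Finset.sum_range_succ, ih]
    have h1 : n + 1 - 1 = n := rfl
    rw [h1]; ring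

/-- Step 1 of the universal approximation proof: any univariate `L`-Lipschitz function on
`[0,1]` is uniformly `ε`-approximated by a linear combination of `N = ⌊L/(2ε)⌋ + 1`
shifted sign functions. -/
theorem sign_combination_approximates_lipschitz (L ε : ℝ) (hL : 0 < L) (hε : 0 < ε)
    (fh : ℝ → ℝ)
    (hlip : ∀ x ∈ Set.Icc (0:ℝ) 1, ∀ y ∈ Set.Icc (0:ℝ) 1, |fh x - fh y| ≤ L * |x - y|)
    (N : ℕ) (hN : N = ⌊L / (2 * ε)⌋₊ + 1) :
    ∃ (α b : Fin N → ℝ), ∀ x ∈ Set.Icc (0:ℝ) 1,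
      |(∑ j, α j * Real.sign (x + b j)) - fh x| < ε := by
  have hNpos : 0 < N := by rw [hN]; exact Nat.succ_pos _
  set Nr : ℝ := (N : ℝ) with hNrdef
  have hNrpos : (0:ℝ) < Nr := by rw [hNrdef]; exact_mod_cast hNpos
  have hLN : L / (2 * Nr) < ε := by
    have h1 : L / (2 * ε) < Nr := by
      rw [hNrdef, hN]
      push_cast
      exact Nat.lt_floor_add_one _
    rw [div_lt_iff₀ (by positivity)]
    rw [div_lt_iff₀ (by positivity)] at h1
    nlinarith
  set m : ℕ → ℝ := fun j => (2*(j:ℝ)+1)/(2*Nr) with hm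
  set G : ℕ → ℝ := fun j => fh (m j) / 2 with hG
  set a : ℕ → ℝ := fun j => if j = 0 then G 0 + G (N-1) else G j - G (j-1) with ha
  set bb : ℕ → ℝ := fun j => if j = 0 then 1 else -((j:ℝ)/Nr) with hbb
  have hm_mem : ∀ j, j ≤ N - 1 → m j ∈ Set.Icc (0:ℝ) 1 := by
    intro j hj
    have hjr : (j:ℝ) ≤ (N:ℝ) - 1 := by
      have h1 : j + 1 ≤ N := by omega
      have h2 : (j:ℝ) + 1 ≤ (N:ℝ) := by exact_mod_cast h1
      linarith
    constructor
    · positivity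
    · rw [div_le_one (by positivity)]
      nlinarith
  refine ⟨fun j => a j, fun j => bb j, ?_⟩
  intro x hx
  obtain ⟨hx0, hx1⟩ := hx
  have hxmem : x ∈ Set.Icc (0:ℝ) 1 := ⟨hx0, hx1⟩
  -- the index k of the subinterval containing x
  set k : ℕ := min ⌊Nr * x⌋₊ (N-1) with hk
  have hkN : k ≤ N - 1 := min_le_right _ _
  have hkx : (k:ℝ) ≤ Nr * x := by
    have h1 : (k:ℝ) ≤ (⌊Nr * x⌋₊ : ℝ) := by exact_mod_cast min_le_left _ _
    exact h1.trans (Nat.floor_le (by positivity))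
  have hxk : ∀ j : ℕ, k < j → j ≤ N - 1 → Nr * x < j := by
    intro j hj hjN
    rcases le_or_gt ⌊Nr * x⌋₊ (N-1) with h | h
    · have hk' : k = ⌊Nr * x⌋₊ := min_eq_left h
      have h2 : Nr * x < (⌊Nr * x⌋₊ : ℝ) + 1 := Nat.lt_floor_add_one _
      have h3 : (k:ℝ) + 1 ≤ (j:ℝ) := by exact_mod_cast hj
      rw [hk'] at h3
      linarith
    · have : k = N - 1 := min_eq_right h.le
      omega
  have hxup : x ≤ ((k:ℝ) + 1) / Nr := by
    rcases eq_or_lt_of_le hkN with h | h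
    · have : ((k:ℝ) + 1) = Nr := by
        rw [h]; rw [Nat.cast_sub hNpos]; push_cast; ring
      rw [this, le_div_iff₀ hNrpos]; nlinarith
    · have h2 : Nr * x < ((k+1:ℕ):ℝ) := hxk (k+1) (Nat.lt_succ_self _) (by omega)
      push_cast at h2
      rw [le_div_iff₀ hNrpos]; linarith
  -- sign values
  have hs0 : Real.sign (x + bb 0) = 1 := by
    have : bb 0 = 1 := by simp [hbb]
    rw [this]
    exact Real.sign_of_pos (by linarith)
  have hbj : ∀ j : ℕ, j ≠ 0 → x + bb j = x - (j:ℝ)/Nr := by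
    intro j hj
    simp [hbb, hj]
    ring
  have hsneg : ∀ j : ℕ, k < j → j ≤ N - 1 → Real.sign (x + bb j) = -1 := by
    intro j hj hjN
    rw [hbj j (by omega)]
    apply Real.sign_of_neg
    have := hxk j hj hjN
    rw [sub_neg, lt_div_iff₀ hNrpos]
    linarith [mul_comm Nr x]
  have hspos : ∀ j : ℕ, j ≠ 0 → j < k → Real.sign (x + bb j) = 1 := by
    intro j hj hjk
    rw [hbj j hj]
    apply Real.sign_of_pos
    have h1 : (j:ℝ) < (k:ℝ) := by exact_mod_cast hjk
    rw [sub_pos, div_lt_iff₀ hNrpos]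
    linarith [mul_comm Nr x]
  -- rewrite sum over Fin N as sum over range
  rw [Fin.sum_univ_eq_sum_range (fun j => a j * Real.sign (x + bb j)) N]
  -- split the sum
  have hsplit : ∑ j ∈ Finset.range N, a j * Real.sign (x + bb j)
      = (∑ j ∈ Finset.Ico 0 (k+1), a j * Real.sign (x + bb j))
        + ∑ j ∈ Finset.Ico (k+1) N, a j * Real.sign (x + bb j) := by
    rw [Finset.range_eq_Ico, ← Finset.sum_Ico_consecutive _ (Nat.zero_le (k+1)) (show k+1 ≤ N by omega)]
  have htel : ∀ u v : ℕ, u ≤ v → ∑ j ∈ Finset.Ico u v, (G j - G (j-1)) = G (v-1) - G (u-1) := by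
    intro u v huv
    rw [Finset.sum_Ico_eq_sub _ huv, tel_sum, tel_sum]
    ring
  have hneg : ∑ j ∈ Finset.Ico (k+1) N, a j * Real.sign (x + bb j) = -(G (N-1) - G k) := by
    have : ∀ j ∈ Finset.Ico (k+1) N, a j * Real.sign (x + bb j) = -(G j - G (j-1)) := by
      intro j hj
      rw [Finset.mem_Ico] at hj
      rw [hsneg j hj.1 (by omega)]
      have : a j = G j - G (j-1) := by simp only [ha]; rw [if_neg (by omega)]
      rw [this]; ring
    rw [Finset.sum_congr rfl this, Finset.sum_neg_distrib, htel (k+1) N (by omega)]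
    simp
  have hmain : ∀ y, y ∈ Set.Icc (0:ℝ) 1 → |y - x| ≤ 1/(2*Nr) → |fh y - fh x| ≤ L/(2*Nr) := by
    intro y hy hd
    calc |fh y - fh x| ≤ L * |y - x| := hlip y hy x hxmem
    _ ≤ L * (1/(2*Nr)) := mul_le_mul_of_nonneg_left hd hL.le
    _ = L/(2*Nr) := by ring
  have hxup' : Nr * x ≤ (k:ℝ) + 1 := by
    rw [mul_comm]; exact (le_div_iff₀ hNrpos).mp hxup
  have hdist : ∀ j : ℕ, ((j:ℝ) ≤ Nr*x) → (Nr*x ≤ (j:ℝ)+1) → |m j - x| ≤ 1/(2*Nr) := by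
    intro j h1 h2
    have e1 : m j - x = (2*(j:ℝ)+1 - 2*(Nr*x))/(2*Nr) := by
      simp only [hm]; field_simp
    rw [abs_le, e1]
    constructor
    · rw [← neg_div, div_le_div_iff_of_pos_right (by positivity)]; linarith
    · rw [div_le_div_iff_of_pos_right (by positivity)]; linarith
  have key : |(∑ j ∈ Finset.range N, a j * Real.sign (x + bb j)) - fh x| ≤ L/(2*Nr) := by
    rcases Nat.eq_zero_or_pos k with hk0 | hk1
    · -- case k = 0
      have hfirst : ∑ j ∈ Finset.Ico 0 (k+1), a j * Real.sign (x + bb j) = G 0 + G (N-1) := by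
        rw [hk0, show Finset.Ico 0 (0+1) = {0} by decide, Finset.sum_singleton, hs0]
        simp [ha]
      rw [hsplit, hneg, hfirst]
      have hS : G 0 + G (N-1) + -(G (N-1) - G k) = fh (m 0) := by
        rw [hk0]; simp only [hG]; ring
      rw [hS]
      apply hmain _ (hm_mem 0 (by omega))
      apply hdist 0 (by push_cast; exact mul_nonneg hNrpos.le hx0)
      have := hxup'; rw [hk0] at this; push_cast at this ⊢; linarith
    · -- case k ≥ 1
      have hkne : k ≠ 0 := by omega
      have hfirst : ∑ j ∈ Finset.Ico 0 (k+1), a j * Real.sign (x + bb j)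
          = (G 0 + G (N-1)) + (G (k-1) - G 0) + a k * Real.sign (x + bb k) := by
        rw [Finset.sum_Ico_succ_top (Nat.zero_le _)]
        rw [← Finset.sum_Ico_consecutive _ (Nat.zero_le 1) hk1]
        have h01 : ∑ j ∈ Finset.Ico 0 1, a j * Real.sign (x + bb j) = G 0 + G (N-1) := by
          rw [show Finset.Ico 0 1 = {0} by decide, Finset.sum_singleton, hs0]
          simp [ha]
        have h1k : ∑ j ∈ Finset.Ico 1 k, a j * Real.sign (x + bb j) = G (k-1) - G 0 := by
          have heq : ∀ j ∈ Finset.Ico 1 k, a j * Real.sign (x + bb j) = G j - G (j-1) := by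
            intro j hj
            rw [Finset.mem_Ico] at hj
            rw [hspos j (by omega) hj.2]
            have : a j = G j - G (j-1) := by simp only [ha]; rw [if_neg (by omega)]
            rw [this]; ring
          rw [Finset.sum_congr rfl heq, htel 1 k hk1]
        rw [h01, h1k]
      have hak : a k = G k - G (k-1) := by simp only [ha]; rw [if_neg hkne]
      have hcast : ((k-1 : ℕ):ℝ) = (k:ℝ) - 1 := by
        rw [Nat.cast_sub hk1]; simp
      have hkmem : m k ∈ Set.Icc (0:ℝ) 1 := hm_mem k hkN
      have hk1mem : m (k-1) ∈ Set.Icc (0:ℝ) 1 := hm_mem (k-1) (by omega)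
      have hxlow : (k:ℝ)/Nr ≤ x := by
        rw [div_le_iff₀ hNrpos]; linarith [mul_comm Nr x]
      rcases eq_or_lt_of_le hxlow with hxeq | hxlt
      · -- x = k/Nr : sign is 0
        have hNx : Nr * x = (k:ℝ) := by
          rw [← hxeq]; field_simp
        have hsk : Real.sign (x + bb k) = 0 := by
          rw [hbj k hkne, ← hxeq, sub_self, Real.sign_zero]
        rw [hsplit, hneg, hfirst, hsk, hak]
        have hS : G 0 + G (N-1) + (G (k-1) - G 0) + (G k - G (k-1)) * 0 + -(G (N-1) - G k)
            = (fh (m (k-1)) - fh x)/2 + (fh (m k) - fh x)/2 + fh x := by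
          simp only [hG]; ring
        rw [hS]
        have e1 : |fh (m (k-1)) - fh x| ≤ L/(2*Nr) := by
          apply hmain _ hk1mem
          apply hdist (k-1) (by rw [hcast, hNx]; linarith) (by rw [hcast, hNx]; linarith)
        have e2 : |fh (m k) - fh x| ≤ L/(2*Nr) := by
          apply hmain _ hkmem
          apply hdist k (by rw [hNx]) (by rw [hNx]; linarith)
        calc |(fh (m (k-1)) - fh x)/2 + (fh (m k) - fh x)/2 + fh x - fh x|
            = |(fh (m (k-1)) - fh x)/2 + (fh (m k) - fh x)/2| := by ring_nf
          _ ≤ |(fh (m (k-1)) - fh x)/2| + |(fh (m k) - fh x)/2| := abs_add_le _ _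
          _ = |fh (m (k-1)) - fh x|/2 + |fh (m k) - fh x|/2 := by
              rw [abs_div, abs_div]; norm_num
          _ ≤ L/(2*Nr) := by linarith
      · -- x > k/Nr : sign is 1
        have hsk : Real.sign (x + bb k) = 1 := by
          rw [hbj k hkne]
          exact Real.sign_of_pos (by linarith)
        rw [hsplit, hneg, hfirst, hsk, hak]
        have hS : G 0 + G (N-1) + (G (k-1) - G 0) + (G k - G (k-1)) * 1 + -(G (N-1) - G k)
            = fh (m k) := by
          simp only [hG]; ring
        rw [hS]
        exact hmain _ hkmem (hdist k hkx hxup')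
  linarith [key, hLN]
end

section
/- Let n_s ≥ 2 and N ≥ 1, and fix input dimension d and output dimension m. (i) The set of functions ℝ^d → ℝ^m realized by shallow LN-Nets of width n_s equals the set of functions realized by shallow LS-Nets of width n_s − 1. (ii) More generally, the set of functions realized by shallow PLN-Nets of norm size n_s and width n_s·N equals the set of functions realized by shallow PLS-Nets of norm size n_s − 1 and width (n_s − 1)·N. -/
/-- Layer scaling (RMSNorm) on `ℝ^n`: `LS(h) = h/σ̃(h)` when `σ̃(h) ≠ 0`, and `0` otherwise. -/
noncomputable def LS {n : ℕ} (h : Fin n → ℝ) : Fin n → ℝ :=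
  let σ : ℝ := Real.sqrt ((∑ i, (h i) ^ 2) / n)
  if σ = 0 then 0 else fun j => h j / σ

/-- Parallel layer scaling: `N` consecutive blocks of size `ns`, `LS` on each. -/
noncomputable def PLS (ns N : ℕ) (h : Fin (N * ns) → ℝ) : Fin (N * ns) → ℝ :=
  fun i => LS (fun j : Fin ns => h (finProdFinEquiv (i.divNat, j))) i.modNat

/-- Functions `ℝ^d → ℝ^m` realized by shallow LN-Nets of width `ns`. -/
def LNNetSet (ns d m : ℕ) : Set ((Fin d → ℝ) → (Fin m → ℝ)) :=
  {f | ∃ (W₁ : Matrix (Fin ns) (Fin d) ℝ) (b₁ : Fin ns → ℝ)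
        (W₂ : Matrix (Fin m) (Fin ns) ℝ) (b₂ : Fin m → ℝ),
        f = fun x => W₂.mulVec (LN (W₁.mulVec x + b₁)) + b₂}

/-- Functions `ℝ^d → ℝ^m` realized by shallow LS-Nets of width `ns`. -/
def LSNetSet (ns d m : ℕ) : Set ((Fin d → ℝ) → (Fin m → ℝ)) :=
  {f | ∃ (W₁ : Matrix (Fin ns) (Fin d) ℝ) (b₁ : Fin ns → ℝ)
        (W₂ : Matrix (Fin m) (Fin ns) ℝ) (b₂ : Fin m → ℝ),
        f = fun x => W₂.mulVec (LS (W₁.mulVec x + b₁)) + b₂}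

/-- Functions `ℝ^d → ℝ^m` realized by shallow PLN-Nets of norm size `ns`, width `ns·N`. -/
def PLNNetSet (ns N d m : ℕ) : Set ((Fin d → ℝ) → (Fin m → ℝ)) :=
  {f | ∃ (W₁ : Matrix (Fin (N * ns)) (Fin d) ℝ) (b₁ : Fin (N * ns) → ℝ)
        (W₂ : Matrix (Fin m) (Fin (N * ns)) ℝ) (b₂ : Fin m → ℝ),
        f = fun x => W₂.mulVec (PLN ns N (W₁.mulVec x + b₁)) + b₂}

/-- Functions `ℝ^d → ℝ^m` realized by shallow PLS-Nets of norm size `ns`, width `ns·N`. -/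
def PLSNetSet (ns N d m : ℕ) : Set ((Fin d → ℝ) → (Fin m → ℝ)) :=
  {f | ∃ (W₁ : Matrix (Fin (N * ns)) (Fin d) ℝ) (b₁ : Fin (N * ns) → ℝ)
        (W₂ : Matrix (Fin m) (Fin (N * ns)) ℝ) (b₂ : Fin m → ℝ),
        f = fun x => W₂.mulVec (PLS ns N (W₁.mulVec x + b₁)) + b₂}

/-! `LN h` is `LS` applied to the centered vector `h - μ(h)·𝟙`, which lies in the hyperplane `𝟙ᗮ`
of dimension `n - 1`. If the columns of `V` form an orthonormal basis of `𝟙ᗮ`, then `V Vᵀ` is the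
centering projection and `V` preserves Euclidean norms, so
`LN h = √(n/(n-1)) • V (LS (Vᵀ h))` and `LS u = √((n-1)/n) • Vᵀ (LN (V u))`.
The matrices `V`, `Vᵀ` and the scalars are absorbed into the affine layers of a shallow net,
in both directions. The parallel case is the same argument with the block diagonal matrix
`diag(V, …, V)`. -/

open Matrix
open scoped Kronecker

section OrthonormalColumns

variable {ι κ : Type*} [Fintype ι] [Fintype κ] {K : Submodule ℝ (EuclideanSpace ℝ ι)}

noncomputable def OrthonormalBasis.columnMatrix (b : OrthonormalBasis κ ℝ K) : Matrix ι κ ℝ :=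
  of fun i j => (b j : EuclideanSpace ℝ ι) i

theorem OrthonormalBasis.transpose_columnMatrix_mul_self [DecidableEq κ]
    (b : OrthonormalBasis κ ℝ K) : b.columnMatrixᵀ * b.columnMatrix = 1 := by
  ext j l
  have := orthonormal_iff_ite.mp b.orthonormal j l
  rw [Submodule.coe_inner, PiLp.inner_apply] at this
  simpa [columnMatrix, mul_apply, one_apply, mul_comm] using this

theorem OrthonormalBasis.columnMatrix_mulVec_transpose_mulVec (b : OrthonormalBasis κ ℝ K)
    (h : ι → ℝ) :
    b.columnMatrix *ᵥ (b.columnMatrixᵀ *ᵥ h) = (K.starProjection (WithLp.toLp 2 h)).ofLp := by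
  funext i
  simp [Submodule.starProjection, b.orthogonalProjectionOnto_apply_eq_sum, columnMatrix, mulVec,
    dotProduct, PiLp.inner_apply, Finset.sum_apply, mul_comm]

end OrthonormalColumns

theorem starProjection_orthogonal_span_one_apply {n : ℕ} (h : Fin n → ℝ) :
    ((ℝ ∙ WithLp.toLp 2 fun _ : Fin n => (1 : ℝ))ᗮ.starProjection (WithLp.toLp 2 h)).ofLp =
      fun i => h i - (∑ j, h j) / n := by
  funext i
  simp [Submodule.starProjection_singleton, EuclideanSpace.norm_eq, PiLp.inner_apply]

theorem exists_isometry_with_centering_projection {n : ℕ} (hn : 0 < n) :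
    ∃ V : Matrix (Fin n) (Fin (n - 1)) ℝ, Vᵀ * V = 1 ∧
      ∀ h : Fin n → ℝ, V *ᵥ (Vᵀ *ᵥ h) = fun i => h i - (∑ j, h j) / n := by
  set one : EuclideanSpace ℝ (Fin n) := WithLp.toLp 2 fun _ => 1
  have hone : one ≠ 0 := fun h0 => by
    simpa [one] using congrFun (congrArg WithLp.ofLp h0) ⟨0, hn⟩
  have : Fact (Module.finrank ℝ (EuclideanSpace ℝ (Fin n)) = n - 1 + 1) := ⟨by simp; omega⟩
  let b := (stdOrthonormalBasis ℝ (ℝ ∙ one)ᗮ).reindex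
    (finCongr (Submodule.finrank_orthogonal_span_singleton (n := n - 1) hone))
  refine ⟨b.columnMatrix, b.transpose_columnMatrix_mul_self, fun h => ?_⟩
  rw [b.columnMatrix_mulVec_transpose_mulVec, starProjection_orthogonal_span_one_apply]

section Normalization

variable {n k : ℕ} {V : Matrix (Fin n) (Fin k) ℝ}

theorem LN_eq_LS_sub_mean (h : Fin n → ℝ) : LN h = LS (fun i => h i - (∑ j, h j) / n) := rfl

-- When `σ̃ u = 0` the junk value `(0 : ℝ)⁻¹ = 0` reproduces the case split in `LS`.
theorem LS_eq_inv_smul (u : Fin n → ℝ) : LS u = (√(u ⬝ᵥ u / n))⁻¹ • u := by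
  simp only [LS]
  split_ifs with hσ
  · simp [dotProduct, ← sq, hσ]
  · funext j
    simp [dotProduct, ← sq, div_eq_inv_mul]

theorem dotProduct_mulVec_self_of_transpose_mul_self (hV : Vᵀ * V = 1) (u : Fin k → ℝ) :
    V *ᵥ u ⬝ᵥ V *ᵥ u = u ⬝ᵥ u := by
  rw [dotProduct_mulVec, ← mulVec_transpose, mulVec_mulVec, hV, one_mulVec]

theorem LS_mulVec_of_transpose_mul_self (hV : Vᵀ * V = 1) (u : Fin k → ℝ) :
    LS (V *ᵥ u) = (√n / √k) • V *ᵥ LS u := by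
  rw [LS_eq_inv_smul, LS_eq_inv_smul, dotProduct_mulVec_self_of_transpose_mul_self hV,
    mulVec_smul, smul_smul]
  congr 1
  rcases Nat.eq_zero_or_pos k with rfl | hk
  · simp [dotProduct]
  · rw [Real.sqrt_div' _ (Nat.cast_nonneg n), Real.sqrt_div' _ (Nat.cast_nonneg k)]
    have : √(k : ℝ) ≠ 0 := by positivity
    field_simp

theorem LN_eq_smul_mulVec_LS (hV : Vᵀ * V = 1)
    (hcenter : ∀ h : Fin n → ℝ, V *ᵥ (Vᵀ *ᵥ h) = fun i => h i - (∑ j, h j) / n)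
    (h : Fin n → ℝ) : LN h = ((√n / √k) • V) *ᵥ LS (Vᵀ *ᵥ h) := by
  rw [LN_eq_LS_sub_mean, ← hcenter, LS_mulVec_of_transpose_mul_self hV, smul_mulVec]

theorem LS_eq_smul_mulVec_LN (hV : Vᵀ * V = 1)
    (hcenter : ∀ h : Fin n → ℝ, V *ᵥ (Vᵀ *ᵥ h) = fun i => h i - (∑ j, h j) / n)
    (hn : n ≠ 0) (hk : k ≠ 0) (u : Fin k → ℝ) : LS u = ((√k / √n) • Vᵀ) *ᵥ LN (V *ᵥ u) := by
  have hVu : Vᵀ *ᵥ (V *ᵥ u) = u := by rw [mulVec_mulVec, hV, one_mulVec]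
  have hc : √k / √n * (√n / √k) = 1 := by
    have : √(n : ℝ) ≠ 0 := by positivity
    have : √(k : ℝ) ≠ 0 := by positivity
    field_simp
  rw [LN_eq_smul_mulVec_LS hV hcenter, hVu, smul_mulVec, smul_mulVec, mulVec_smul, mulVec_mulVec,
    hV, one_mulVec, smul_smul, hc, one_smul]

end Normalization

-- `LNNetSet ns`, `LSNetSet k`, `PLNNetSet ns N` and `PLSNetSet k N` are definitionally
-- `ShallowNetSet` of `LN`, `LS`, `blockwise N LN` and `blockwise N LS`.
def ShallowNetSet {n : ℕ} (act : (Fin n → ℝ) → Fin n → ℝ) (d m : ℕ) :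
    Set ((Fin d → ℝ) → Fin m → ℝ) :=
  {f | ∃ (W₁ : Matrix (Fin n) (Fin d) ℝ) (b₁ : Fin n → ℝ)
        (W₂ : Matrix (Fin m) (Fin n) ℝ) (b₂ : Fin m → ℝ),
        f = fun x => W₂ *ᵥ act (W₁ *ᵥ x + b₁) + b₂}

namespace ShallowNetSet

variable {n k d m : ℕ} {A : (Fin n → ℝ) → Fin n → ℝ} {B : (Fin k → ℝ) → Fin k → ℝ}

theorem subset_of_factor {M : Matrix (Fin n) (Fin k) ℝ} {P : Matrix (Fin k) (Fin n) ℝ}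
    (hA : ∀ h, A h = M *ᵥ B (P *ᵥ h)) : ShallowNetSet A d m ⊆ ShallowNetSet B d m := by
  rintro _ ⟨W₁, b₁, W₂, b₂, rfl⟩
  refine ⟨P * W₁, P *ᵥ b₁, W₂ * M, b₂, funext fun x => ?_⟩
  simp only [hA, mulVec_add, mulVec_mulVec]

theorem eq_of_factor {M : Matrix (Fin n) (Fin k) ℝ} {P : Matrix (Fin k) (Fin n) ℝ}
    {M' : Matrix (Fin k) (Fin n) ℝ} {P' : Matrix (Fin n) (Fin k) ℝ}
    (hA : ∀ h, A h = M *ᵥ B (P *ᵥ h)) (hB : ∀ u, B u = M' *ᵥ A (P' *ᵥ u)) :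
    ShallowNetSet A d m = ShallowNetSet B d m :=
  (subset_of_factor hA).antisymm (subset_of_factor hB)

end ShallowNetSet

section Blockwise

variable {N a b c : ℕ}

def blockwise (N : ℕ) (F : (Fin a → ℝ) → Fin b → ℝ) (h : Fin (N * a) → ℝ) : Fin (N * b) → ℝ :=
  fun i => F (fun j => h (finProdFinEquiv (i.divNat, j))) i.modNat

def blockDiagonalFin (N : ℕ) (M : Matrix (Fin a) (Fin b) ℝ) :
    Matrix (Fin (N * a)) (Fin (N * b)) ℝ :=
  reindex finProdFinEquiv finProdFinEquiv ((1 : Matrix (Fin N) (Fin N) ℝ) ⊗ₖ M)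

@[simp]
theorem Fin.divNat_finProdFinEquiv (q : Fin N) (j : Fin a) :
    (finProdFinEquiv (q, j)).divNat = q :=
  congrArg Prod.fst (finProdFinEquiv.symm_apply_apply (q, j))

@[simp]
theorem Fin.modNat_finProdFinEquiv (q : Fin N) (j : Fin a) :
    (finProdFinEquiv (q, j)).modNat = j :=
  congrArg Prod.snd (finProdFinEquiv.symm_apply_apply (q, j))

@[simp]
theorem blockwise_apply_finProdFinEquiv (F : (Fin a → ℝ) → Fin b → ℝ) (h : Fin (N * a) → ℝ)
    (q : Fin N) (j : Fin b) :
    blockwise N F h (finProdFinEquiv (q, j)) = F (fun j' => h (finProdFinEquiv (q, j'))) j := by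
  simp [blockwise]

theorem blockwise_comp (F : (Fin b → ℝ) → Fin c → ℝ) (G : (Fin a → ℝ) → Fin b → ℝ) :
    blockwise N (F ∘ G) = blockwise N F ∘ blockwise N G := by
  funext h i
  obtain ⟨⟨q, j⟩, rfl⟩ := finProdFinEquiv.surjective i
  simp

theorem blockDiagonalFin_mulVec (M : Matrix (Fin a) (Fin b) ℝ) (h : Fin (N * b) → ℝ) :
    blockDiagonalFin N M *ᵥ h = blockwise N (M *ᵥ ·) h := by
  funext i
  obtain ⟨⟨q, j⟩, rfl⟩ := finProdFinEquiv.surjective i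
  simp [blockDiagonalFin, mulVec, dotProduct, ← finProdFinEquiv.sum_comp, Fintype.sum_prod_type,
    one_apply]

theorem blockwise_eq_of_factor {F : (Fin a → ℝ) → Fin a → ℝ} {G : (Fin b → ℝ) → Fin b → ℝ}
    {M : Matrix (Fin a) (Fin b) ℝ} {P : Matrix (Fin b) (Fin a) ℝ}
    (hF : ∀ h, F h = M *ᵥ G (P *ᵥ h)) (h : Fin (N * a) → ℝ) :
    blockwise N F h = blockDiagonalFin N M *ᵥ blockwise N G (blockDiagonalFin N P *ᵥ h) := by
  obtain rfl : F = (M *ᵥ ·) ∘ G ∘ (P *ᵥ ·) := funext hF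
  simp only [blockDiagonalFin_mulVec, blockwise_comp, Function.comp_apply]

end Blockwise

theorem LNNetSet_eq_LSNetSet_and_PLNNetSet_eq_PLSNetSet_general
    (ns N d m : ℕ) (hns : 2 ≤ ns) :
    LNNetSet ns d m = LSNetSet (ns - 1) d m ∧
    PLNNetSet ns N d m = PLSNetSet (ns - 1) N d m := by
  obtain ⟨V, hV, hcenter⟩ := exists_isometry_with_centering_projection (n := ns) (by omega)
  have hLN := LN_eq_smul_mulVec_LS hV hcenter
  have hLS := LS_eq_smul_mulVec_LN hV hcenter (by omega) (by omega)
  exact ⟨ShallowNetSet.eq_of_factor hLN hLS,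
    ShallowNetSet.eq_of_factor (blockwise_eq_of_factor hLN) (blockwise_eq_of_factor hLS)⟩

/-- Shallow LN-Nets of width `n_s` and shallow LS-Nets of width `n_s − 1` realize the same
functions, and likewise for the corresponding parallel (PLN/PLS) structures. -/
theorem LNNetSet_eq_LSNetSet_and_PLNNetSet_eq_PLSNetSet
    (ns N d m : ℕ) (hns : 2 ≤ ns) (hN : 1 ≤ N) :
    LNNetSet ns d m = LSNetSet (ns - 1) d m ∧
    PLNNetSet ns N d m = PLSNetSet (ns - 1) N d m :=
  LNNetSet_eq_LSNetSet_and_PLNNetSet_eq_PLSNetSet_general ns N d m hns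
end

section
/- Let d ≥ 2, let LN denote layer normalization on ℝ^d and LS layer scaling on ℝ^{d−1}. Then there exist linear maps φ₁: ℝ^{d−1} → ℝ^d and φ₂: ℝ^d → ℝ^{d−1} such that LS = φ₂ ∘ LN ∘ φ₁ on all of ℝ^{d−1}, and there exist linear maps φ₁*: ℝ^d → ℝ^{d−1} and φ₂*: ℝ^{d−1} → ℝ^d such that LN = φ₂* ∘ LS ∘ φ₁* on all of ℝ^d. -/
/-!
`LN` is `LS` applied after subtracting the mean, and subtracting the mean is the orthogonal
projection of `ℝ^d` onto the hyperplane `𝟙ᗮ`, of dimension `d - 1`. Identify `𝟙ᗮ` isometrically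
with `ℝ^(d-1)`. Since `LS` only sees the direction of a vector and the ambient dimension, the
isometry commutes with `LS` up to the constant factor `√d / √(d - 1)`, and both factorizations
follow.
-/

open Module

noncomputable def meanCenter {n : ℕ} (h : Fin n → ℝ) : Fin n → ℝ :=
  fun j => h j - (∑ i, h i) / n

theorem LN_eq_LS_meanCenter {n : ℕ} (h : Fin n → ℝ) : LN h = LS (meanCenter h) := rfl

theorem LS_eq_inv_sqrt_smul {n : ℕ} (h : Fin n → ℝ) :
    LS h = (√((∑ i, h i ^ 2) / n))⁻¹ • h := by
  simp only [LS]
  split_ifs with hσ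
  · simp [hσ]
  · ext j
    simp [div_eq_inv_mul]

theorem LS_comp_eq_smul_comp_LS {m n : ℕ} (hm : m ≠ 0) (L : (Fin m → ℝ) →ₗ[ℝ] (Fin n → ℝ))
    (hL : ∀ x, ∑ i, L x i ^ 2 = ∑ i, x i ^ 2) (x : Fin m → ℝ) :
    LS (L x) = (√n / √m) • L (LS x) := by
  rw [LS_eq_inv_sqrt_smul, LS_eq_inv_sqrt_smul, map_smul, smul_smul, hL]
  have hm' : √(m : ℝ) ≠ 0 := by positivity
  rw [Real.sqrt_div' _ (Nat.cast_nonneg n), Real.sqrt_div' _ (Nat.cast_nonneg m), inv_div,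
    inv_div, div_mul_div_comm, mul_comm (√(m : ℝ)), mul_div_mul_right _ _ hm']

theorem Submodule.exists_linearIsometry_comp_eq_starProjection
    {E : Type*} [NormedAddCommGroup E] [InnerProductSpace ℝ E] (K : Submodule ℝ E)
    [FiniteDimensional ℝ K] {m : ℕ} (hK : finrank ℝ K = m) :
    ∃ (ι : EuclideanSpace ℝ (Fin m) →ₗᵢ[ℝ] E) (π : E →ₗ[ℝ] EuclideanSpace ℝ (Fin m)),
      (∀ x, π (ι x) = x) ∧ ∀ y, ι (π y) = K.starProjection y := by
  let e := ((stdOrthonormalBasis ℝ K).reindex (finCongr hK)).repr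
  refine ⟨K.subtypeₗᵢ.comp e.symm.toLinearIsometry,
    e.toLinearEquiv.toLinearMap ∘ₗ K.orthogonalProjectionOnto.toLinearMap,
    fun x => ?_, fun y => ?_⟩
  · simp
  · simp [Submodule.starProjection_apply, -Submodule.coe_orthogonalProjectionOnto_apply]

noncomputable def onesVec (n : ℕ) : EuclideanSpace ℝ (Fin n) := WithLp.toLp 2 fun _ => 1

theorem finrank_orthogonal_span_onesVec {n : ℕ} (hn : n ≠ 0) :
    finrank ℝ (ℝ ∙ onesVec n)ᗮ = n - 1 := by
  have hne : onesVec n ≠ 0 := fun h => by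
    simpa [onesVec] using congr_arg (fun v : EuclideanSpace ℝ (Fin n) => v ⟨0, by omega⟩) h
  refine Submodule.finrank_add_finrank_orthogonal' ?_
  rw [finrank_span_singleton hne, finrank_euclideanSpace_fin]
  omega

theorem starProjection_orthogonal_span_onesVec {n : ℕ} (y : EuclideanSpace ℝ (Fin n)) :
    (ℝ ∙ onesVec n)ᗮ.starProjection y = WithLp.toLp 2 (meanCenter y) := by
  have hinner : inner ℝ (onesVec n) y = ∑ i, y i := by simp [onesVec, PiLp.inner_apply]
  have hnorm : ‖onesVec n‖ ^ 2 = n := by simp [EuclideanSpace.real_norm_sq_eq, onesVec]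
  rw [Submodule.starProjection_orthogonal_val, Submodule.starProjection_singleton, hinner, hnorm]
  ext j
  simp [meanCenter, onesVec]

theorem exists_isometry_comp_eq_meanCenter (d : ℕ) (hd : d ≠ 0) :
    ∃ (ι : (Fin (d - 1) → ℝ) →ₗ[ℝ] (Fin d → ℝ)) (π : (Fin d → ℝ) →ₗ[ℝ] (Fin (d - 1) → ℝ)),
      (∀ x, ∑ i, ι x i ^ 2 = ∑ i, x i ^ 2) ∧ (∀ x, π (ι x) = x) ∧
        ∀ y, ι (π y) = meanCenter y := by
  obtain ⟨ι, π, hπι, hιπ⟩ := (ℝ ∙ onesVec d)ᗮ.exists_linearIsometry_comp_eq_starProjection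
    (finrank_orthogonal_span_onesVec hd)
  let eE := WithLp.linearEquiv 2 ℝ (Fin d → ℝ)
  let eF := WithLp.linearEquiv 2 ℝ (Fin (d - 1) → ℝ)
  refine ⟨eF.arrowCongr eE ι.toLinearMap, eE.arrowCongr eF π,
    fun x => ?_, fun x => ?_, fun y => ?_⟩
  · change ∑ i, ι (WithLp.toLp 2 x) i ^ 2 = ∑ i, (WithLp.toLp 2 x) i ^ 2
    rw [← EuclideanSpace.real_norm_sq_eq, ← EuclideanSpace.real_norm_sq_eq, ι.norm_map]
  · change (π (ι (WithLp.toLp 2 x))).ofLp = x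
    rw [hπι]
  · change (ι (π (WithLp.toLp 2 y))).ofLp = meanCenter y
    rw [hιπ, starProjection_orthogonal_span_onesVec]

/-- `LS` on `ℝ^{d−1}` factors through `LN` on `ℝ^d` via linear maps, and conversely `LN` on
`ℝ^d` factors through `LS` on `ℝ^{d−1}` via linear maps. -/
theorem LS_factors_LN_and_LN_factors_LS (d : ℕ) (hd : 2 ≤ d) :
    (∃ (φ₁ : (Fin (d - 1) → ℝ) →ₗ[ℝ] (Fin d → ℝ))
       (φ₂ : (Fin d → ℝ) →ₗ[ℝ] (Fin (d - 1) → ℝ)),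
       ∀ x : Fin (d - 1) → ℝ, φ₂ (LN (φ₁ x)) = LS x) ∧
    (∃ (ψ₁ : (Fin d → ℝ) →ₗ[ℝ] (Fin (d - 1) → ℝ))
       (ψ₂ : (Fin (d - 1) → ℝ) →ₗ[ℝ] (Fin d → ℝ)),
       ∀ x : Fin d → ℝ, ψ₂ (LS (ψ₁ x)) = LN x) := by
  obtain ⟨ι, π, hι, hπι, hιπ⟩ := exists_isometry_comp_eq_meanCenter d (by omega)
  have hd₁ : d - 1 ≠ 0 := by omega
  have hLS : ∀ x, LS (ι x) = (√d / √(d - 1 : ℕ)) • ι (LS x) :=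
    LS_comp_eq_smul_comp_LS hd₁ ι hι
  have hc : √d / √(d - 1 : ℕ) ≠ 0 := by
    have : (0 : ℝ) < (d - 1 : ℕ) := by exact_mod_cast Nat.pos_of_ne_zero hd₁
    positivity
  refine ⟨⟨ι, (√d / √(d - 1 : ℕ))⁻¹ • π, fun x => ?_⟩,
    ⟨π, (√d / √(d - 1 : ℕ)) • ι, fun x => ?_⟩⟩
  · have hcenter : meanCenter (ι x) = ι x := by rw [← hιπ, hπι]
    rw [LN_eq_LS_meanCenter, hcenter, hLS, LinearMap.smul_apply, map_smul, hπι,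
      inv_smul_smul₀ hc]
  · rw [LN_eq_LS_meanCenter, ← hιπ, hLS, LinearMap.smul_apply]
end

section
/- Let p ≥ q ≥ 1 be even integers such that p/q is an odd integer, and define φ_{p,q}(x) = x^{p/q}/(1+x^p)^{1/q}. Then for every non-negative integer m of the form m = p/q + p·j with j ∈ ℕ₀, the m-th derivative of φ_{p,q} at 0 satisfies |φ_{p,q}^{(m)}(0)| ≥ 1. -/
/-- The `(p,q)`-activation `φ_{p,q}(x) = x^{p/q}/(1+x^p)^{1/q}` (for even `p`, so
`x^p ≥ 0`), where `r = p/q`. -/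
noncomputable def phipq (p q r : ℕ) (x : ℝ) : ℝ := x ^ r / (1 + x ^ p) ^ ((1 : ℝ) / q)

/-!
Near `0` we have `φ_{p,q}(x) = x ^ r * (1 + x ^ p) ^ (-1/q)`, so substituting `x ^ p` into the
binomial series shows that the Taylor coefficient of `φ_{p,q}` at `m = r + p j` is
`C(-1/q, j)`, i.e. `φ_{p,q}^{(m)}(0) = m! C(-1/q, j)`. For `j ≥ 1`,
`|C(-1/q, j)| = (1/q)(1/q + 1)⋯(1/q + j - 1) / j! ≥ (1/q) (j-1)! / j! = 1 / (q j)`,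
and `q j ≤ p j ≤ m ≤ m!`.
-/

open FormalMultilinearSeries Finset Filter Topology
open scoped Nat

theorem HasFPowerSeriesAt.iteratedDeriv_eq_factorial_smul_coeff {𝕜 F : Type*}
    [NontriviallyNormedField 𝕜] [NormedAddCommGroup F] [NormedSpace 𝕜 F] [CompleteSpace F]
    {f : 𝕜 → F} {p : FormalMultilinearSeries 𝕜 𝕜 F} {x : 𝕜} (hf : HasFPowerSeriesAt f p x)
    (n : ℕ) : iteratedDeriv n f x = n ! • p.coeff n := by
  obtain ⟨R, hR⟩ := hf
  rw [iteratedDeriv_eq_iteratedFDeriv, ← hR.factorial_smul, apply_eq_prod_smul_coeff]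
  simp

theorem injective_add_mul {p : ℕ} (hp : 0 < p) (r : ℕ) :
    Function.Injective (fun k : ℕ => r + p * k) :=
  (add_right_injective r).comp (mul_right_injective₀ hp.ne')

theorem HasFPowerSeriesAt.pow_mul_comp_pow {𝕜 : Type*} [NontriviallyNormedField 𝕜]
    {f : 𝕜 → 𝕜} {c : ℕ → 𝕜} (hf : HasFPowerSeriesAt f (ofScalars 𝕜 c) 0) (r : ℕ) {p : ℕ}
    (hp : 0 < p) :
    HasFPowerSeriesAt (fun x => x ^ r * f (x ^ p))
      (ofScalars 𝕜 (Function.extend (fun k => r + p * k) c 0)) 0 := by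
  have hinj := injective_add_mul hp r
  have hpow : Tendsto (fun x : 𝕜 => x ^ p) (𝓝 0) (𝓝 0) := by
    simpa [zero_pow hp.ne'] using (continuous_pow p).tendsto (0 : 𝕜)
  rw [hasFPowerSeriesAt_iff] at hf ⊢
  filter_upwards [hpow.eventually hf] with x hx
  simp only [zero_add] at hx ⊢
  rw [← hinj.hasSum_iff fun n hn => by
    simp [coeff_ofScalars, Function.extend_apply' _ _ _ fun ⟨k, hk⟩ => hn ⟨k, hk⟩]]
  refine (hx.mul_left (x ^ r)).congr_fun fun k => ?_
  simp only [Function.comp_apply, coeff_ofScalars, smul_eq_mul, hinj.extend_apply c 0 k]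
  ring

theorem Ring.choose_eq_prod_range_div {K : Type*} [Field K] [CharZero K] (a : K) (n : ℕ) :
    Ring.choose a n = (∏ i ∈ range n, (a - i)) / n ! := by
  rw [Ring.choose_eq_smul, ← Polynomial.aeval_eq_smeval, ← descPochhammer_eval_eq_prod_range,
    smul_eq_mul, div_eq_inv_mul]
  simp [Polynomial.aeval_def, Polynomial.eval₂_eq_eval_map, descPochhammer_map]

theorem div_le_abs_choose_neg {b : ℝ} (hb : 0 < b) {n : ℕ} (hn : 0 < n) :
    b / n ≤ |Ring.choose (-b) n| := by
  obtain ⟨k, rfl⟩ : ∃ k, n = k + 1 := ⟨n - 1, by omega⟩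
  have hprod : (k ! : ℝ) * b ≤ ∏ i ∈ range (k + 1), (b + i) := by
    rw [prod_range_succ', ← prod_range_add_one_eq_factorial, Nat.cast_prod]
    gcongr with i
    · push_cast; linarith
    · simp
  have habs : |∏ i ∈ range (k + 1), (-b - i)| = ∏ i ∈ range (k + 1), (b + i) := by
    rw [abs_prod]
    refine prod_congr rfl fun i _ => ?_
    rw [show -b - i = -(b + i) by ring, abs_neg, abs_of_pos (by positivity)]
  rw [Ring.choose_eq_prod_range_div, abs_div, habs, Nat.abs_cast, le_div_iff₀ (by positivity),
    Nat.factorial_succ]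
  calc b / ↑(k + 1) * ↑((k + 1) * k !) = k ! * b := by push_cast; field_simp
    _ ≤ _ := hprod

theorem one_le_factorial_mul_abs_choose_neg_inv {q n m : ℕ} (hq : 0 < q) (hnm : q * n ≤ m) :
    1 ≤ m ! * |Ring.choose (-(1 / q : ℝ)) n| := by
  rcases Nat.eq_zero_or_pos n with rfl | hn
  · simpa [Ring.choose_zero_right] using Nat.one_le_iff_ne_zero.mpr m.factorial_ne_zero
  calc (1 : ℝ) = (q * n : ℕ) * ((1 / q) / n) := by push_cast; field_simp
    _ ≤ m ! * |Ring.choose (-(1 / q : ℝ)) n| := by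
      gcongr
      · exact hnm.trans m.self_le_factorial
      · exact div_le_abs_choose_neg (by positivity) hn

theorem phipq_eventuallyEq_pow_mul_one_add_pow_rpow {p : ℕ} (hp : 0 < p) (q r : ℕ) :
    (fun x => x ^ r * (1 + x ^ p) ^ (-(1 / q : ℝ))) =ᶠ[𝓝 0] phipq p q r := by
  have hpow : Tendsto (fun x : ℝ => x ^ p) (𝓝 0) (𝓝 0) := by
    simpa [zero_pow hp.ne'] using (continuous_pow p).tendsto (0 : ℝ)
  filter_upwards [hpow.eventually (eventually_gt_nhds (show (-1 : ℝ) < 0 by norm_num))] with x hx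
  rw [phipq, Real.rpow_neg (by linarith)]
  exact (div_eq_mul_inv _ _).symm

theorem iteratedDeriv_phipq_zero {p : ℕ} (hp : 0 < p) (q r j : ℕ) :
    iteratedDeriv (r + p * j) (phipq p q r) 0 = (r + p * j) ! * Ring.choose (-(1 / q : ℝ)) j := by
  have hφ := (Real.one_add_rpow_hasFPowerSeriesAt_zero.pow_mul_comp_pow r hp).congr
    (phipq_eventuallyEq_pow_mul_one_add_pow_rpow hp q r)
  rw [hφ.iteratedDeriv_eq_factorial_smul_coeff, coeff_ofScalars, nsmul_eq_mul,
    (injective_add_mul hp r).extend_apply]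

theorem phipq_iteratedDeriv_zero_ge_one_general (p q r : ℕ)
    (hq : 1 ≤ q) (hpq : q ≤ p)
    (m j : ℕ) (hm : m = r + p * j) :
    1 ≤ |iteratedDeriv m (phipq p q r) 0| := by
  subst hm
  rw [iteratedDeriv_phipq_zero (by omega), abs_mul, Nat.abs_cast]
  exact one_le_factorial_mul_abs_choose_neg_inv hq (by nlinarith)

/-- Derivatives of `φ_{p,q}` at zero: for every `m = p/q + p·j`, `|φ_{p,q}^{(m)}(0)| ≥ 1`. -/
theorem phipq_iteratedDeriv_zero_ge_one (p q r : ℕ) (hep : Even p) (heq : Even q)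
    (hq : 1 ≤ q) (hpq : q ≤ p) (hr : p = q * r) (hodd : Odd r)
    (m j : ℕ) (hm : m = r + p * j) :
    1 ≤ |iteratedDeriv m (phipq p q r) 0| :=
  phipq_iteratedDeriv_zero_ge_one_general p q r hq hpq m j hm
end

section
/- Let p ≥ 2 be an integer, let t ≥ 0 and m > t be integers with d := m − t satisfying 0 ≤ d ≤ p. Let β₀, β₁, …, β_p be distinct real numbers, and let c₀, c₁, …, c_p be the unique solution of the Vandermonde system ∑_{k=0}^p c_k β_k^ℓ = δ_{ℓ,d} for ℓ = 0, 1, …, p. Set A_ℓ = ∑_{k=0}^p c_k β_k^{m−ℓ} for 0 ≤ ℓ ≤ t−1. Then for every y ∈ ℝ, y^t = (1/C(m,t)) ( ∑_{k=0}^p c_k (y+β_k)^m − ∑_{ℓ=0}^{t−1} C(m,ℓ) A_ℓ y^ℓ ), where C(m,t) denotes the binomial coefficient m choose t. -/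
/-! Expanding `(y + βₖ)^m` binomially, the coefficient of `y^ℓ` in `∑ₖ cₖ (y + βₖ)^m` is
`C(m,ℓ)` times the moment `∑ₖ cₖ βₖ^(m-ℓ)`. For `t ≤ ℓ ≤ m` the exponent `m - ℓ` lies in
`0, …, m - t ≤ p`, so the Vandermonde conditions make these moments `δ_{ℓ,t}`: only the
terms of degree `< t` and `C(m,t) y^t` survive. -/

open Finset

theorem sum_mul_add_pow_eq_sum_choose_mul_moment {ι R : Type*} [CommSemiring R] (s : Finset ι)
    (c β : ι → R) (y : R) (m : ℕ) :
    ∑ k ∈ s, c k * (y + β k) ^ m =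
      ∑ ℓ ∈ range (m + 1), (m.choose ℓ : R) * (∑ k ∈ s, c k * β k ^ (m - ℓ)) * y ^ ℓ := by
  simp_rw [add_pow, mul_sum, sum_mul]
  rw [sum_comm]
  exact sum_congr rfl fun ℓ _ => sum_congr rfl fun k _ => by ring

theorem sum_range_choose_mul_mul_pow_of_eq_ite {R : Type*} [CommSemiring R] (a : ℕ → R)
    {t m : ℕ} (htm : t ≤ m) (ha : ∀ j ≤ m - t, a j = if j = m - t then 1 else 0) (y : R) :
    ∑ ℓ ∈ range (m + 1), (m.choose ℓ : R) * a (m - ℓ) * y ^ ℓ =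
      ∑ ℓ ∈ range t, (m.choose ℓ : R) * a (m - ℓ) * y ^ ℓ + (m.choose t : R) * y ^ t := by
  rw [← sum_range_add_sum_Ico _ (by omega : t ≤ m + 1)]
  congr 1
  rw [sum_eq_single_of_mem t (mem_Ico.mpr ⟨le_rfl, by omega⟩)]
  · rw [ha (m - t) le_rfl, if_pos rfl, mul_one]
  · intro ℓ hℓ hne
    rw [mem_Ico] at hℓ
    rw [ha (m - ℓ) (by omega), if_neg (by omega), mul_zero, zero_mul]

theorem monomial_linear_representation_general (p t m : ℕ) (htm : t < m)
    (hdp : m - t ≤ p) (β c : Fin (p + 1) → ℝ)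
    (hc : ∀ ℓ : ℕ, ℓ ≤ p →
      (∑ k, c k * β k ^ ℓ) = if ℓ = m - t then 1 else 0) :
    ∀ y : ℝ, y ^ t = (1 / (m.choose t : ℝ)) *
      ((∑ k, c k * (y + β k) ^ m) -
        ∑ ℓ ∈ Finset.range t,
          (m.choose ℓ : ℝ) * (∑ k, c k * β k ^ (m - ℓ)) * y ^ ℓ) := by
  intro y
  have hchoose : (m.choose t : ℝ) ≠ 0 := Nat.cast_ne_zero.mpr (Nat.choose_pos htm.le).ne'
  rw [sum_mul_add_pow_eq_sum_choose_mul_moment,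
    sum_range_choose_mul_mul_pow_of_eq_ite (fun j => ∑ k, c k * β k ^ j) htm.le
      (fun j hj => hc j (hj.trans hdp)),
    add_sub_cancel_left, one_div, inv_mul_cancel_left₀ hchoose]

/-- Linear representation of monomials: if `c₀,…,c_p` solves the Vandermonde system
`∑ₖ cₖ βₖ^ℓ = δ_{ℓ,m−t}` (`ℓ = 0,…,p`) for distinct nodes `β₀,…,β_p`, then
`y^t = (1/C(m,t))(∑ₖ cₖ (y+βₖ)^m − ∑_{ℓ<t} C(m,ℓ) A_ℓ y^ℓ)` with
`A_ℓ = ∑ₖ cₖ βₖ^{m−ℓ}`. -/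
theorem monomial_linear_representation (p t m : ℕ) (hp : 2 ≤ p) (htm : t < m)
    (hdp : m - t ≤ p) (β c : Fin (p + 1) → ℝ) (hβ : Function.Injective β)
    (hc : ∀ ℓ : ℕ, ℓ ≤ p →
      (∑ k, c k * β k ^ ℓ) = if ℓ = m - t then 1 else 0) :
    ∀ y : ℝ, y ^ t = (1 / (m.choose t : ℝ)) *
      ((∑ k, c k * (y + β k) ^ m) -
        ∑ ℓ ∈ Finset.range t,
          (m.choose ℓ : ℝ) * (∑ k, c k * β k ^ (m - ℓ)) * y ^ ℓ) :=
  monomial_linear_representation_general p t m htm hdp β c hc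
end
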